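/- arXiv:1001.5176 — 11 statements merged into one kernel-verified Lean document; each statement's English description precedes it below -/
import Mathlib

section
/- Let ε = (ε_1,…,ε_n) be independent centered Gaussian random variables with variance σ² (σ > 0), and let X be a real n×p matrix whose columns ψ_1,…,ψ_p satisfy ‖ψ_j‖_2² = n for every j. Fix t > 0 and set λ_init := 4σ√((2t + 2·log p)/n). Then P( max_{1≤j≤p} 4|ε·ψ_j|/n ≤ λ_init ) ≥ 1 − 2·exp(−t). -/
/-!
Each correlation `ε·ψ_j` is a weighted sum of independent centred Gaussians, hence sub-Gaussian
with variance proxy `σ² ‖ψ_j‖² = σ² n`. The Chernoff bound on both tails gives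
`P(|ε·ψ_j| ≥ a) ≤ 2 exp(-a² / (2σ²n))`, and for `a = n λ_init / 4` this is exactly `2 exp(-t) / p`;
a union bound over the `p` columns finishes the proof.
-/

open MeasureTheory ProbabilityTheory Real
open scoped NNReal

namespace ProbabilityTheory

variable {Ω : Type*} {mΩ : MeasurableSpace Ω} {μ : Measure Ω}

lemma hasSubgaussianMGF_of_map_eq_gaussianReal {X : Ω → ℝ} {v : ℝ≥0}
    (h : μ.map X = gaussianReal 0 v) : HasSubgaussianMGF X v μ := by
  have hX : AEMeasurable X μ := aemeasurable_of_map_neZero (by rw [h]; infer_instance)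
  rw [← HasSubgaussianMGF.id_map_iff hX, h]
  exact ⟨integrable_exp_mul_gaussianReal, fun t ↦ by simp [mgf_id_gaussianReal]⟩

namespace HasSubgaussianMGF

lemma sum_mul_of_iIndepFun {ι : Type*} {ε : ι → Ω → ℝ} (h_indep : iIndepFun ε μ) {v : ℝ≥0}
    (h_subG : ∀ i, HasSubgaussianMGF (ε i) v μ) (s : Finset ι) (c : ι → ℝ) :
    HasSubgaussianMGF (fun ω ↦ ∑ i ∈ s, ε i ω * c i) (v * ∑ i ∈ s, ‖c i‖₊ ^ 2) μ := by
  have h_scaled : iIndepFun (fun i ω ↦ c i * ε i ω) μ :=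
    h_indep.comp (fun i x ↦ c i * x) fun i ↦ measurable_const_mul _
  have h := sum_of_iIndepFun h_scaled (s := s) fun i _ ↦ (h_subG i).const_mul (c i)
  convert h using 1
  · simp_rw [mul_comm (ε _ _)]
  · rw [Finset.mul_sum]
    refine Finset.sum_congr rfl fun i _ ↦ NNReal.eq ?_
    simp only [NNReal.coe_mul, NNReal.coe_pow, coe_nnnorm, norm_eq_abs, sq_abs]
    exact mul_comm _ _

lemma measureReal_abs_ge_le {X : Ω → ℝ} {c : ℝ≥0} (h : HasSubgaussianMGF X c μ) {a : ℝ}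
    (ha : 0 ≤ a) : μ.real {ω | a ≤ |X ω|} ≤ 2 * exp (-a ^ 2 / (2 * c)) := by
  have h_split : {ω | a ≤ |X ω|} = {ω | a ≤ X ω} ∪ {ω | a ≤ (-X) ω} := by
    ext ω
    simp [le_abs]
  rw [h_split, two_mul]
  exact (measureReal_union_le _ _).trans
    (add_le_add (h.measure_ge_le ha) (h.neg.measure_ge_le ha))

end HasSubgaussianMGF

lemma one_sub_le_measureReal_forall_abs_le [IsProbabilityMeasure μ] {ι : Type*} [Fintype ι]
    {Y : ι → Ω → ℝ} {c : ℝ≥0} (h : ∀ j, HasSubgaussianMGF (Y j) c μ) {a : ℝ} (ha : 0 ≤ a) :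
    1 - Fintype.card ι * (2 * exp (-a ^ 2 / (2 * c))) ≤ μ.real {ω | ∀ j, |Y j ω| ≤ a} := by
  have h_cover : {ω | ∀ j, |Y j ω| ≤ a} ∪ ⋃ j, {ω | a ≤ |Y j ω|} = Set.univ := by
    refine Set.eq_univ_of_forall fun ω ↦ ?_
    by_cases hω : ∀ j, |Y j ω| ≤ a
    · exact Or.inl hω
    · obtain ⟨j, hj⟩ := not_forall.1 hω
      exact Or.inr (Set.mem_iUnion.2 ⟨j, (not_le.1 hj).le⟩)
  have h_union : 1 ≤ μ.real {ω | ∀ j, |Y j ω| ≤ a} + μ.real (⋃ j, {ω | a ≤ |Y j ω|}) := by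
    simpa [h_cover] using
      measureReal_union_le (μ := μ) {ω | ∀ j, |Y j ω| ≤ a} (⋃ j, {ω | a ≤ |Y j ω|})
  have h_tails :
      μ.real (⋃ j, {ω | a ≤ |Y j ω|}) ≤ Fintype.card ι * (2 * exp (-a ^ 2 / (2 * c))) :=
    calc μ.real (⋃ j, {ω | a ≤ |Y j ω|})
        ≤ ∑ j, μ.real {ω | a ≤ |Y j ω|} := measureReal_iUnion_fintype_le _
      _ ≤ ∑ _j : ι, 2 * exp (-a ^ 2 / (2 * c)) :=
          Finset.sum_le_sum fun j _ ↦ (h j).measureReal_abs_ge_le ha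
      _ = Fintype.card ι * (2 * exp (-a ^ 2 / (2 * c))) := by simp
  linarith

end ProbabilityTheory

theorem gaussian_noise_bound_general
    (n p : ℕ) (hn : 0 < n) (hp : 0 < p)
    (X : Matrix (Fin n) (Fin p) ℝ)
    (hX : ∀ j, ∑ i, (X i j) ^ 2 = (n : ℝ))
    (σ : ℝ) (hσ : 0 < σ)
    (Ω : Type*) [MeasurableSpace Ω] (P : Measure Ω) [IsProbabilityMeasure P]
    (ε : Fin n → Ω → ℝ)
    (hindep : iIndepFun ε P)
    (hdist : ∀ i, Measure.map (ε i) P = gaussianReal 0 ⟨σ ^ 2, sq_nonneg σ⟩)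
    (t : ℝ) (ht : 0 < t)
    (lamInit : ℝ)
    (hlam : lamInit = 4 * σ * Real.sqrt ((2 * t + 2 * Real.log p) / n)) :
    ENNReal.ofReal (1 - 2 * Real.exp (-t)) ≤
      P {ω | ∀ j, 4 * |∑ i, ε i ω * X i j| / n ≤ lamInit} := by
  have hn' : (0 : ℝ) < n := by exact_mod_cast hn
  set v : ℝ≥0 := ⟨σ ^ 2, sq_nonneg σ⟩
  have h_col : ∀ j, HasSubgaussianMGF (fun ω ↦ ∑ i, ε i ω * X i j) (v * n) P := fun j ↦ by
    convert HasSubgaussianMGF.sum_mul_of_iIndepFun hindep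
      (fun i ↦ hasSubgaussianMGF_of_map_eq_gaussianReal (hdist i)) Finset.univ (X · j) using 2
    ext
    simp [hX j]
  have h_event : {ω | ∀ j, 4 * |∑ i, ε i ω * X i j| / n ≤ lamInit}
      = {ω | ∀ j, |∑ i, ε i ω * X i j| ≤ n * lamInit / 4} :=
    Set.ext fun ω ↦ forall_congr' fun j ↦ by
      rw [div_le_iff₀ hn', le_div_iff₀ four_pos]
      constructor <;> intro <;> linarith
  have h_exponent : -(n * lamInit / 4) ^ 2 / (2 * (v * n : ℝ≥0)) = -t - Real.log p := by
    have hq : 0 ≤ (2 * t + 2 * Real.log p) / n := by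
      have := Real.log_natCast_nonneg p
      positivity
    rw [hlam, NNReal.coe_mul, NNReal.coe_natCast, show (v : ℝ) = σ ^ 2 from rfl,
      show ∀ x : ℝ, (n * (4 * σ * x) / 4) ^ 2 = n ^ 2 * σ ^ 2 * x ^ 2 by intro x; ring,
      Real.sq_sqrt hq]
    field_simp
    ring
  have h_count : (p : ℝ) * (2 * Real.exp (-t - Real.log p)) = 2 * Real.exp (-t) := by
    rw [Real.exp_sub, Real.exp_log (by exact_mod_cast hp)]
    field_simp
  rw [h_event, ← ofReal_measureReal]
  refine ENNReal.ofReal_le_ofReal ?_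
  have h_bound := one_sub_le_measureReal_forall_abs_le h_col (a := n * lamInit / 4)
    (by rw [hlam]; positivity)
  rwa [h_exponent, Fintype.card_fin, h_count] at h_bound

/-- Lemma 1 (noise lemma): for i.i.d. centered Gaussian noise with variance `σ²` and
normalized design columns, the event `𝒯` has probability at least `1 - 2·exp(-t)`
when `λ_init = 4σ√((2t + 2 log p)/n)`. -/
theorem gaussian_noise_bound
    (n p : ℕ) (hn : 0 < n) (hp : 0 < p)
    (X : Matrix (Fin n) (Fin p) ℝ)
    (hX : ∀ j, ∑ i, (X i j) ^ 2 = (n : ℝ))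
    (σ : ℝ) (hσ : 0 < σ)
    (Ω : Type*) [MeasurableSpace Ω] (P : Measure Ω) [IsProbabilityMeasure P]
    (ε : Fin n → Ω → ℝ)
    (hmeas : ∀ i, Measurable (ε i))
    (hindep : iIndepFun ε P)
    (hdist : ∀ i, Measure.map (ε i) P = gaussianReal 0 ⟨σ ^ 2, sq_nonneg σ⟩)
    (t : ℝ) (ht : 0 < t)
    (lamInit : ℝ)
    (hlam : lamInit = 4 * σ * Real.sqrt ((2 * t + 2 * Real.log p) / n)) :
    ENNReal.ofReal (1 - 2 * Real.exp (-t)) ≤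
      P {ω | ∀ j, 4 * |∑ i, ε i ω * X i j| / n ≤ lamInit} :=
  gaussian_noise_bound_general n p hn hp X hX σ hσ Ω P ε hindep hdist t ht lamInit hlam
end

section
/- Let S ⊆ {1,…,p} be a nonempty index set with s := |S|, let L > 0 and M > 0, and suppose the weights satisfy min_{j∉S} w_j ≥ M/L and ‖w_S‖_2 ≤ M√s. Let φ > 0 satisfy ‖Xγ‖_n ≥ φ‖γ_S‖_2 for every γ ∈ ℝ^p with ‖γ_{S^c}‖_1 ≤ 2L√s·‖γ_S‖_2 (a (2L,S)-restricted eigenvalue lower bound). Then any weighted Lasso solution β_weight satisfies, for every β ∈ ℝ^p: ‖Xβ_weight − f⁰‖_n² ≤ 2‖Xβ_S − f⁰‖_n² + 6·λ_init²·λ_weight²·M²·s/φ². -/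
/-!
Comparing the Lasso objective at `β_weight` and at `β_S` gives the basic inequality
`‖Xβ_weight − f⁰‖_n² + λ(M/L)‖γ_{Sᶜ}‖₁ ≤ ‖Xβ_S − f⁰‖_n² + λM√s‖γ_S‖₂` for `γ = β_weight − β_S`,
by the triangle inequality on `S`, Cauchy–Schwarz against `w_S`, and `w ≥ M/L` off `S`.
Either `λM√s‖γ_S‖₂ ≤ ‖Xβ_S − f⁰‖_n²`, which gives the factor `2`, or `γ` lies in the cone
of the restricted eigenvalue condition, so that `φ‖γ_S‖₂ ≤ ‖Xγ‖_n ≤ ‖Xβ_weight − f⁰‖_n + ‖Xβ_S − f⁰‖_n`,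
and the bound follows from a quadratic inequality.
-/

open Finset

noncomputable def empNorm {n : ℕ} (v : Fin n → ℝ) : ℝ :=
  √((∑ i, v i ^ 2) / n)

theorem empNorm_sq {n : ℕ} (v : Fin n → ℝ) : empNorm v ^ 2 = (∑ i, v i ^ 2) / n :=
  Real.sq_sqrt (by positivity)

theorem empNorm_sub_le {n : ℕ} (u v : Fin n → ℝ) : empNorm (u - v) ≤ empNorm u + empNorm v := by
  have h_eucl : ∀ x : Fin n → ℝ, empNorm x = ‖WithLp.toLp 2 x‖ / √n := fun x => by
    simp only [empNorm, EuclideanSpace.norm_eq, Real.norm_eq_abs, sq_abs,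
      Real.sqrt_div' _ (Nat.cast_nonneg n)]
  rw [h_eucl, h_eucl, h_eucl, ← add_div, WithLp.toLp_sub]
  gcongr
  exact norm_sub_le _ _

section WeightedL1

variable {ι : Type*} [Fintype ι] [DecidableEq ι] {w β βw : ι → ℝ} {S : Finset ι}

theorem weighted_l1_sub_le_of_support (hw : ∀ j, 0 ≤ w j) (hβ : ∀ j ∉ S, β j = 0) :
    ∑ j, w j * |β j| - ∑ j, w j * |βw j|
      ≤ ∑ j ∈ S, w j * |βw j - β j| - ∑ j ∈ Sᶜ, w j * |βw j - β j| := by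
  rw [← sum_add_sum_compl S (fun j => w j * |β j|), ← sum_add_sum_compl S (fun j => w j * |βw j|)]
  have h_on : ∑ j ∈ S, w j * |β j| - ∑ j ∈ S, w j * |βw j| ≤ ∑ j ∈ S, w j * |βw j - β j| := by
    rw [← sum_sub_distrib]
    gcongr with j
    rw [← mul_sub, abs_sub_comm]
    exact mul_le_mul_of_nonneg_left (abs_sub_abs_le_abs_sub _ _) (hw j)
  have h_off : ∑ j ∈ Sᶜ, w j * |β j| - ∑ j ∈ Sᶜ, w j * |βw j|
      = -∑ j ∈ Sᶜ, w j * |βw j - β j| := by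
    rw [← sum_sub_distrib, ← sum_neg_distrib]
    refine sum_congr rfl fun j hj => ?_
    simp [hβ j (mem_compl.1 hj)]
  linarith

theorem weighted_l1_sub_le {L M : ℝ} (hw : ∀ j, 0 ≤ w j) (hwmin : ∀ j ∉ S, M / L ≤ w j)
    (hwS : √(∑ j ∈ S, w j ^ 2) ≤ M * √S.card) (hβ : ∀ j ∉ S, β j = 0) :
    ∑ j, w j * |β j| - ∑ j, w j * |βw j|
      ≤ M * √S.card * √(∑ j ∈ S, (βw j - β j) ^ 2) - M / L * ∑ j ∈ Sᶜ, |βw j - β j| := by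
  have h_on : ∑ j ∈ S, w j * |βw j - β j| ≤ M * √S.card * √(∑ j ∈ S, (βw j - β j) ^ 2) :=
    calc ∑ j ∈ S, w j * |βw j - β j|
        ≤ √(∑ j ∈ S, w j ^ 2) * √(∑ j ∈ S, |βw j - β j| ^ 2) :=
          Real.sum_mul_le_sqrt_mul_sqrt _ _ _
      _ ≤ M * √S.card * √(∑ j ∈ S, (βw j - β j) ^ 2) := by
          simp only [sq_abs]
          gcongr
  have h_off : M / L * ∑ j ∈ Sᶜ, |βw j - β j| ≤ ∑ j ∈ Sᶜ, w j * |βw j - β j| := by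
    rw [mul_sum]
    exact sum_le_sum fun j hj =>
      mul_le_mul_of_nonneg_right (hwmin j (mem_compl.1 hj)) (abs_nonneg _)
  linarith [weighted_l1_sub_le_of_support (βw := βw) hw hβ]

end WeightedL1

/-- Here `a`, `b` stand for the prediction errors of the estimator and of the oracle, and `t`, `u`
for `‖γ_S‖₂` and `‖γ_{Sᶜ}‖₁`; `ρ` plays the role of `√s`. -/
theorem sq_le_of_basic_inequality {a b t u lam M L ρ φ : ℝ} (hlam : 0 < lam) (hM : 0 < M)
    (hL : 0 < L) (hρ : 0 ≤ ρ) (hφ : 0 < φ) (hu : 0 ≤ u)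
    (hbasic : a ^ 2 + lam * (M / L) * u ≤ b ^ 2 + lam * M * ρ * t)
    (hcompat : u ≤ 2 * L * ρ * t → φ * t ≤ a + b) :
    a ^ 2 ≤ 2 * b ^ 2 + 6 * lam ^ 2 * M ^ 2 * ρ ^ 2 / φ ^ 2 := by
  have h_pen : 0 ≤ lam * (M / L) * u := by positivity
  rcases le_or_gt (lam * M * ρ * t) (b ^ 2) with h_small | h_small
  · have : 0 ≤ 6 * lam ^ 2 * M ^ 2 * ρ ^ 2 / φ ^ 2 := by positivity
    linarith
  have h_cone : u ≤ 2 * L * ρ * t := by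
    refine le_of_mul_le_mul_left ?_ (by positivity : 0 < lam * (M / L))
    calc lam * (M / L) * u ≤ 2 * (lam * M * ρ * t) := by nlinarith [sq_nonneg a]
      _ = lam * (M / L) * (2 * L * ρ * t) := by field_simp
  set c := lam * M * ρ / φ with hc
  have h_quad : a ^ 2 ≤ 2 * c * (a + b) :=
    calc a ^ 2 ≤ 2 * (lam * M * ρ * t) := by linarith
      _ = 2 * c * (φ * t) := by rw [hc]; field_simp
      _ ≤ 2 * c * (a + b) := by gcongr; exact hcompat h_cone
  calc a ^ 2 ≤ 2 * b ^ 2 + 6 * c ^ 2 := by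
        nlinarith [sq_nonneg (a - 2 * c), sq_nonneg (b - c)]
    _ = 2 * b ^ 2 + 6 * lam ^ 2 * M ^ 2 * ρ ^ 2 / φ ^ 2 := by rw [hc]; ring

theorem weighted_lasso_prediction_general
    (n p : ℕ)
    (X : Matrix (Fin n) (Fin p) ℝ) (f0 : Fin n → ℝ)
    (w : Fin p → ℝ) (hw : ∀ j, 0 ≤ w j)
    (lamInit lamWeight : ℝ) (hlamInit : 0 < lamInit) (hlamWeight : 0 < lamWeight)
    (S : Finset (Fin p))
    (L M : ℝ) (hL : 0 < L) (hM : 0 < M)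
    (hwmin : ∀ j ∉ S, M / L ≤ w j)
    (hwS : Real.sqrt (∑ j ∈ S, (w j) ^ 2) ≤ M * Real.sqrt (S.card))
    (φ : ℝ) (hφ : 0 < φ)
    (hRE : ∀ γ : Fin p → ℝ,
      (∑ j ∈ Sᶜ, |γ j|) ≤ 2 * L * Real.sqrt (S.card) * Real.sqrt (∑ j ∈ S, (γ j) ^ 2) →
      φ * Real.sqrt (∑ j ∈ S, (γ j) ^ 2) ≤ Real.sqrt ((∑ i, (X.mulVec γ i) ^ 2) / n))
    (βw : Fin p → ℝ)
    (hβw : ∀ β : Fin p → ℝ,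
      (∑ i, (X.mulVec βw i - f0 i) ^ 2) / n + lamInit * lamWeight * ∑ j, w j * |βw j|
        ≤ (∑ i, (X.mulVec β i - f0 i) ^ 2) / n + lamInit * lamWeight * ∑ j, w j * |β j|)
    (β : Fin p → ℝ) :
    (∑ i, (X.mulVec βw i - f0 i) ^ 2) / n
      ≤ 2 * ((∑ i, (X.mulVec (fun j => if j ∈ S then β j else 0) i - f0 i) ^ 2) / n)
        + 6 * lamInit ^ 2 * lamWeight ^ 2 * M ^ 2 * S.card / φ ^ 2 := by
  set βS : Fin p → ℝ := fun j => if j ∈ S then β j else 0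
  have hβS : ∀ j ∉ S, βS j = 0 := fun j hj => if_neg hj
  have hlam : 0 < lamInit * lamWeight := mul_pos hlamInit hlamWeight
  have key := sq_le_of_basic_inequality (a := empNorm (fun i => X.mulVec βw i - f0 i))
    (b := empNorm (fun i => X.mulVec βS i - f0 i)) (t := √(∑ j ∈ S, (βw j - βS j) ^ 2))
    (u := ∑ j ∈ Sᶜ, |βw j - βS j|) (ρ := √S.card) hlam hM hL (Real.sqrt_nonneg _) hφ
    (sum_nonneg fun j _ => abs_nonneg _) ?basic ?compat
  case basic =>
    have hpen := mul_le_mul_of_nonneg_left (weighted_l1_sub_le (βw := βw) hw hwmin hwS hβS) hlam.le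
    rw [empNorm_sq, empNorm_sq]
    linarith [hβw βS]
  case compat =>
    intro h_cone
    have h_diff : X.mulVec (βw - βS)
        = (fun i => X.mulVec βw i - f0 i) - (fun i => X.mulVec βS i - f0 i) := by
      ext i
      simp [Matrix.mulVec_sub]
    calc φ * √(∑ j ∈ S, (βw j - βS j) ^ 2) ≤ empNorm (X.mulVec (βw - βS)) := hRE _ h_cone
      _ ≤ _ := h_diff ▸ empNorm_sub_le _ _
  rw [empNorm_sq, empNorm_sq, Real.sq_sqrt (Nat.cast_nonneg _)] at key
  linear_combination key

/-- Prediction-error part of Theorem `weight` (noiseless weighted Lasso). -/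
theorem weighted_lasso_prediction
    (n p : ℕ) (hn : 0 < n)
    (X : Matrix (Fin n) (Fin p) ℝ) (f0 : Fin n → ℝ)
    (w : Fin p → ℝ) (hw : ∀ j, 0 ≤ w j)
    (lamInit lamWeight : ℝ) (hlamInit : 0 < lamInit) (hlamWeight : 0 < lamWeight)
    (S : Finset (Fin p)) (hS : S.Nonempty)
    (L M : ℝ) (hL : 0 < L) (hM : 0 < M)
    (hwmin : ∀ j ∉ S, M / L ≤ w j)
    (hwS : Real.sqrt (∑ j ∈ S, (w j) ^ 2) ≤ M * Real.sqrt (S.card))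
    (φ : ℝ) (hφ : 0 < φ)
    (hRE : ∀ γ : Fin p → ℝ,
      (∑ j ∈ Sᶜ, |γ j|) ≤ 2 * L * Real.sqrt (S.card) * Real.sqrt (∑ j ∈ S, (γ j) ^ 2) →
      φ * Real.sqrt (∑ j ∈ S, (γ j) ^ 2) ≤ Real.sqrt ((∑ i, (X.mulVec γ i) ^ 2) / n))
    (βw : Fin p → ℝ)
    (hβw : ∀ β : Fin p → ℝ,
      (∑ i, (X.mulVec βw i - f0 i) ^ 2) / n + lamInit * lamWeight * ∑ j, w j * |βw j|
        ≤ (∑ i, (X.mulVec β i - f0 i) ^ 2) / n + lamInit * lamWeight * ∑ j, w j * |β j|)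
    (β : Fin p → ℝ) :
    (∑ i, (X.mulVec βw i - f0 i) ^ 2) / n
      ≤ 2 * ((∑ i, (X.mulVec (fun j => if j ∈ S then β j else 0) i - f0 i) ^ 2) / n)
        + 6 * lamInit ^ 2 * lamWeight ^ 2 * M ^ 2 * S.card / φ ^ 2 :=
  weighted_lasso_prediction_general n p X f0 w hw lamInit lamWeight hlamInit hlamWeight S L M hL hM
    hwmin hwS φ hφ hRE βw hβw β
end

section
/- Let S ⊆ {1,…,p} be a nonempty index set with s := |S|, let L > 0 and M > 0, and suppose the weights satisfy min_{j∉S} w_j ≥ M/L and ‖w_S‖_2 ≤ M√s. Let φ > 0 satisfy ‖Xγ‖_n ≥ φ‖γ_S‖_2 for every γ ∈ ℝ^p with ‖γ_{S^c}‖_1 ≤ 2L√s·‖γ_S‖_2. Then any weighted Lasso solution β_weight satisfies, for every β ∈ ℝ^p: √s·‖(β_weight)_S − β_S‖_2 + ‖(β_weight)_{S^c}‖_1/L ≤ 3‖Xβ_S − f⁰‖_n²/(λ_init·λ_weight·M) + 3·λ_init·λ_weight·M·s/φ². -/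
/-!
Comparing the objective at `βw` with its value at `β_S`, and using `w ≥ M / L` off `S` and
Cauchy–Schwarz on `S`, gives the basic inequality
`‖Xβw - f⁰‖ₙ² + λM ‖(βw)_Sᶜ‖₁ / L ≤ ‖Xβ_S - f⁰‖ₙ² + λM √s ‖(βw - β)_S‖₂`.
If `‖(βw)_Sᶜ‖₁ > 2L√s ‖(βw - β)_S‖₂`, the `Sᶜ` term absorbs the last term, and the basic
inequality alone bounds both error terms by `‖Xβ_S - f⁰‖ₙ²`. Otherwise `γ = βw - β_S` lies
in the cone of the compatibility condition, so
`φ ‖(βw - β)_S‖₂ ≤ ‖Xγ‖ₙ ≤ ‖Xβw - f⁰‖ₙ + ‖Xβ_S - f⁰‖ₙ`,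
and an AM–GM step with `c = λM√s / φ` turns the basic inequality into the bound.
-/

open Finset Matrix

noncomputable def empiricalNorm {n : ℕ} (v : Fin n → ℝ) : ℝ := √((∑ i, v i ^ 2) / n)

section EmpiricalNorm

variable {n : ℕ}

lemma sq_empiricalNorm (v : Fin n → ℝ) : empiricalNorm v ^ 2 = (∑ i, v i ^ 2) / n :=
  Real.sq_sqrt (by positivity)

lemma empiricalNorm_eq_norm_div_sqrt (v : Fin n → ℝ) :
    empiricalNorm v = ‖WithLp.toLp 2 v‖ / √n := by
  simp only [empiricalNorm, Real.sqrt_div' _ n.cast_nonneg, EuclideanSpace.norm_eq,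
    Real.norm_eq_abs, sq_abs]

lemma empiricalNorm_sub_le (u v : Fin n → ℝ) :
    empiricalNorm (u - v) ≤ empiricalNorm u + empiricalNorm v := by
  simp only [empiricalNorm_eq_norm_div_sqrt, WithLp.toLp_sub, ← add_div]
  gcongr
  exact norm_sub_le _ _

end EmpiricalNorm

section MixedError

variable {q r a b t φ κ L : ℝ}

lemma mixed_error_le_of_compatible (hκ : 0 < κ) (hφ : 0 < φ) (ht : 0 ≤ t)
    (hbasic : q ^ 2 + κ * (b / L) ≤ r ^ 2 + κ * (t * a)) (hcompat : φ * a ≤ q + r) :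
    t * a + b / L ≤ 2 * r ^ 2 / κ + 2 * κ * t ^ 2 / φ ^ 2 := by
  obtain ⟨c, hc⟩ : ∃ c, c = κ * t / φ := ⟨_, rfl⟩
  have hta : κ * (t * a) ≤ c * (q + r) :=
    calc κ * (t * a) = c * (φ * a) := by rw [hc]; field_simp
      _ ≤ c * (q + r) := by gcongr; rw [hc]; positivity
  -- `2 c x ≤ c² + x²` for `x = q` and `x = r` absorbs `q²` and leaves `2 r² + 2 c²`.
  have hscaled : κ * (t * a + b / L) ≤ 2 * r ^ 2 + 2 * c ^ 2 := by
    nlinarith [sq_nonneg (c - q), sq_nonneg (c - r)]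
  rw [← mul_le_mul_iff_of_pos_left hκ]
  calc κ * (t * a + b / L) ≤ 2 * r ^ 2 + 2 * c ^ 2 := hscaled
    _ = κ * (2 * r ^ 2 / κ + 2 * κ * t ^ 2 / φ ^ 2) := by rw [hc]; field_simp

lemma mixed_error_le_of_not_cone (hκ : 0 < κ) (hL : 0 < L)
    (hbasic : q ^ 2 + κ * (b / L) ≤ r ^ 2 + κ * (t * a)) (hcone : 2 * L * t * a < b) :
    t * a + b / L ≤ 3 * r ^ 2 / κ := by
  have hta : t * a < b / L / 2 := by
    rw [div_div, lt_div_iff₀ (by positivity)]; linarith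
  have hbL : b / L / 2 ≤ r ^ 2 / κ := by
    rw [le_div_iff₀ hκ]
    nlinarith [sq_nonneg q]
  have : 3 * r ^ 2 / κ = 3 * (r ^ 2 / κ) := by ring
  linarith

lemma mixed_error_le (hκ : 0 < κ) (hφ : 0 < φ) (hL : 0 < L) (ht : 0 ≤ t)
    (hbasic : q ^ 2 + κ * (b / L) ≤ r ^ 2 + κ * (t * a))
    (hcompat : b ≤ 2 * L * t * a → φ * a ≤ q + r) :
    t * a + b / L ≤ 3 * r ^ 2 / κ + 3 * κ * t ^ 2 / φ ^ 2 := by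
  rcases le_or_gt b (2 * L * t * a) with hcone | hcone
  · refine (mixed_error_le_of_compatible hκ hφ ht hbasic (hcompat hcone)).trans ?_
    gcongr <;> norm_num
  · exact (mixed_error_le_of_not_cone hκ hL hbasic hcone).trans
      (le_add_of_nonneg_right (by positivity))

end MixedError

section WeightedLasso

variable {n : ℕ} {ι : Type*} [Fintype ι]

noncomputable def weightedLassoObjective (X : Matrix (Fin n) ι ℝ) (f0 : Fin n → ℝ) (w : ι → ℝ)
    (lam : ℝ) (β : ι → ℝ) : ℝ :=
  (∑ i, (X *ᵥ β - f0) i ^ 2) / n + lam * ∑ j, w j * |β j|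

lemma weightedLassoObjective_eq_sq_empiricalNorm_add (X : Matrix (Fin n) ι ℝ) (f0 : Fin n → ℝ)
    (w : ι → ℝ) (lam : ℝ) (β : ι → ℝ) :
    weightedLassoObjective X f0 w lam β
      = empiricalNorm (X *ᵥ β - f0) ^ 2 + lam * ∑ j, w j * |β j| := by
  rw [weightedLassoObjective, sq_empiricalNorm]

variable [DecidableEq ι] {w : ι → ℝ} {S : Finset ι} {L M : ℝ}

lemma weighted_l1_support_add_le (hw : ∀ j ∈ S, 0 ≤ w j) (hwmin : ∀ j ∉ S, M / L ≤ w j)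
    (hwS : √(∑ j ∈ S, w j ^ 2) ≤ M * √(#S)) (βw β : ι → ℝ) :
    ∑ j ∈ S, w j * |β j| + M * ((∑ j ∈ Sᶜ, |βw j|) / L)
      ≤ ∑ j, w j * |βw j| + M * (√(#S) * √(∑ j ∈ S, (βw j - β j) ^ 2)) := by
  have htriangle : ∑ j ∈ S, w j * |β j|
      ≤ ∑ j ∈ S, w j * |βw j| + ∑ j ∈ S, w j * |βw j - β j| := by
    rw [← sum_add_distrib]
    refine sum_le_sum fun j hj => ?_
    rw [← mul_add]
    gcongr
    · exact hw j hj
    · simpa using abs_sub (βw j) (βw j - β j)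
  have hcauchy :
      ∑ j ∈ S, w j * |βw j - β j| ≤ M * (√(#S) * √(∑ j ∈ S, (βw j - β j) ^ 2)) :=
    calc ∑ j ∈ S, w j * |βw j - β j|
        ≤ √(∑ j ∈ S, w j ^ 2) * √(∑ j ∈ S, (βw j - β j) ^ 2) := by
          simpa only [sq_abs] using Real.sum_mul_le_sqrt_mul_sqrt S w (fun j => |βw j - β j|)
      _ ≤ M * √(#S) * √(∑ j ∈ S, (βw j - β j) ^ 2) := by gcongr
      _ = _ := mul_assoc _ _ _
  have hoff : M * ((∑ j ∈ Sᶜ, |βw j|) / L) ≤ ∑ j ∈ Sᶜ, w j * |βw j| := by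
    rw [mul_div_assoc', mul_div_right_comm, mul_sum]
    exact sum_le_sum fun j hj => by gcongr; exact hwmin j (mem_compl.mp hj)
  rw [← sum_add_sum_compl S fun j => w j * |βw j|]
  linarith

lemma weighted_lasso_basic_inequality {X : Matrix (Fin n) ι ℝ} {f0 : Fin n → ℝ} {lam : ℝ}
    (hlam : 0 < lam) (hw : ∀ j ∈ S, 0 ≤ w j) (hwmin : ∀ j ∉ S, M / L ≤ w j)
    (hwS : √(∑ j ∈ S, w j ^ 2) ≤ M * √(#S)) {βw : ι → ℝ}
    (hβw : ∀ β, weightedLassoObjective X f0 w lam βw ≤ weightedLassoObjective X f0 w lam β)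
    (β : ι → ℝ) :
    empiricalNorm (X *ᵥ βw - f0) ^ 2 + lam * M * ((∑ j ∈ Sᶜ, |βw j|) / L)
      ≤ empiricalNorm (X *ᵥ (fun j => if j ∈ S then β j else 0) - f0) ^ 2
        + lam * M * (√(#S) * √(∑ j ∈ S, (βw j - β j) ^ 2)) := by
  have hmin := hβw fun j => if j ∈ S then β j else 0
  have hpenalty : ∑ j, w j * |if j ∈ S then β j else 0| = ∑ j ∈ S, w j * |β j| := by
    simp only [apply_ite abs, abs_zero, mul_ite, mul_zero, sum_ite_mem, univ_inter]
  rw [weightedLassoObjective_eq_sq_empiricalNorm_add,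
    weightedLassoObjective_eq_sq_empiricalNorm_add, hpenalty] at hmin
  have := mul_le_mul_of_nonneg_left (weighted_l1_support_add_le hw hwmin hwS βw β) hlam.le
  linarith

lemma compatibility_of_mem_cone {X : Matrix (Fin n) ι ℝ} (f0 : Fin n → ℝ) {φ : ℝ}
    (hRE : ∀ γ : ι → ℝ, ∑ j ∈ Sᶜ, |γ j| ≤ 2 * L * √(#S) * √(∑ j ∈ S, γ j ^ 2) →
      φ * √(∑ j ∈ S, γ j ^ 2) ≤ empiricalNorm (X *ᵥ γ))
    (βw β : ι → ℝ)
    (hcone : ∑ j ∈ Sᶜ, |βw j| ≤ 2 * L * √(#S) * √(∑ j ∈ S, (βw j - β j) ^ 2)) :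
    φ * √(∑ j ∈ S, (βw j - β j) ^ 2)
      ≤ empiricalNorm (X *ᵥ βw - f0)
        + empiricalNorm (X *ᵥ (fun j => if j ∈ S then β j else 0) - f0) := by
  set βS : ι → ℝ := fun j => if j ∈ S then β j else 0
  have hsupp : ∑ j ∈ S, (βw - βS) j ^ 2 = ∑ j ∈ S, (βw j - β j) ^ 2 :=
    sum_congr rfl fun j hj => by simp [βS, hj]
  have hoff : ∑ j ∈ Sᶜ, |(βw - βS) j| = ∑ j ∈ Sᶜ, |βw j| :=
    sum_congr rfl fun j hj => by simp [βS, mem_compl.mp hj]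
  have hfit : X *ᵥ (βw - βS) = (X *ᵥ βw - f0) - (X *ᵥ βS - f0) := by
    rw [mulVec_sub]; abel
  calc φ * √(∑ j ∈ S, (βw j - β j) ^ 2) ≤ empiricalNorm (X *ᵥ (βw - βS)) := by
        rw [← hsupp]; exact hRE _ (by rwa [hsupp, hoff])
    _ ≤ _ := hfit ▸ empiricalNorm_sub_le _ _

end WeightedLasso

theorem weighted_lasso_estimation_mixed_general
    (n p : ℕ)
    (X : Matrix (Fin n) (Fin p) ℝ) (f0 : Fin n → ℝ)
    (w : Fin p → ℝ) (hw : ∀ j, 0 ≤ w j)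
    (lamInit lamWeight : ℝ) (hlamInit : 0 < lamInit) (hlamWeight : 0 < lamWeight)
    (S : Finset (Fin p))
    (L M : ℝ) (hL : 0 < L) (hM : 0 < M)
    (hwmin : ∀ j ∉ S, M / L ≤ w j)
    (hwS : Real.sqrt (∑ j ∈ S, (w j) ^ 2) ≤ M * Real.sqrt (S.card))
    (φ : ℝ) (hφ : 0 < φ)
    (hRE : ∀ γ : Fin p → ℝ,
      (∑ j ∈ Sᶜ, |γ j|) ≤ 2 * L * Real.sqrt (S.card) * Real.sqrt (∑ j ∈ S, (γ j) ^ 2) →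
      φ * Real.sqrt (∑ j ∈ S, (γ j) ^ 2) ≤ Real.sqrt ((∑ i, (X.mulVec γ i) ^ 2) / n))
    (βw : Fin p → ℝ)
    (hβw : ∀ β : Fin p → ℝ,
      (∑ i, (X.mulVec βw i - f0 i) ^ 2) / n + lamInit * lamWeight * ∑ j, w j * |βw j|
        ≤ (∑ i, (X.mulVec β i - f0 i) ^ 2) / n + lamInit * lamWeight * ∑ j, w j * |β j|)
    (β : Fin p → ℝ) :
    Real.sqrt (S.card) * Real.sqrt (∑ j ∈ S, (βw j - β j) ^ 2)
        + (∑ j ∈ Sᶜ, |βw j|) / L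
      ≤ 3 * ((∑ i, (X.mulVec (fun j => if j ∈ S then β j else 0) i - f0 i) ^ 2) / n)
            / (lamInit * lamWeight * M)
        + 3 * lamInit * lamWeight * M * S.card / φ ^ 2 := by
  have hlam := mul_pos hlamInit hlamWeight
  have hbasic := weighted_lasso_basic_inequality hlam (fun j _ => hw j) hwmin hwS hβw β
  have hbound := mixed_error_le (mul_pos hlam hM) hφ hL (Real.sqrt_nonneg _) hbasic
    (compatibility_of_mem_cone f0 hRE βw β)
  rw [Real.sq_sqrt (Nat.cast_nonneg _), sq_empiricalNorm] at hbound
  simp only [Pi.sub_apply] at hbound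
  convert hbound using 2
  ring

/-- Mixed ℓ2/ℓ1 estimation part of Theorem `weight` (noiseless weighted Lasso). -/
theorem weighted_lasso_estimation_mixed
    (n p : ℕ) (hn : 0 < n)
    (X : Matrix (Fin n) (Fin p) ℝ) (f0 : Fin n → ℝ)
    (w : Fin p → ℝ) (hw : ∀ j, 0 ≤ w j)
    (lamInit lamWeight : ℝ) (hlamInit : 0 < lamInit) (hlamWeight : 0 < lamWeight)
    (S : Finset (Fin p)) (hS : S.Nonempty)
    (L M : ℝ) (hL : 0 < L) (hM : 0 < M)
    (hwmin : ∀ j ∉ S, M / L ≤ w j)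
    (hwS : Real.sqrt (∑ j ∈ S, (w j) ^ 2) ≤ M * Real.sqrt (S.card))
    (φ : ℝ) (hφ : 0 < φ)
    (hRE : ∀ γ : Fin p → ℝ,
      (∑ j ∈ Sᶜ, |γ j|) ≤ 2 * L * Real.sqrt (S.card) * Real.sqrt (∑ j ∈ S, (γ j) ^ 2) →
      φ * Real.sqrt (∑ j ∈ S, (γ j) ^ 2) ≤ Real.sqrt ((∑ i, (X.mulVec γ i) ^ 2) / n))
    (βw : Fin p → ℝ)
    (hβw : ∀ β : Fin p → ℝ,
      (∑ i, (X.mulVec βw i - f0 i) ^ 2) / n + lamInit * lamWeight * ∑ j, w j * |βw j|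
        ≤ (∑ i, (X.mulVec β i - f0 i) ^ 2) / n + lamInit * lamWeight * ∑ j, w j * |β j|)
    (β : Fin p → ℝ) :
    Real.sqrt (S.card) * Real.sqrt (∑ j ∈ S, (βw j - β j) ^ 2)
        + (∑ j ∈ Sᶜ, |βw j|) / L
      ≤ 3 * ((∑ i, (X.mulVec (fun j => if j ∈ S then β j else 0) i - f0 i) ^ 2) / n)
            / (lamInit * lamWeight * M)
        + 3 * lamInit * lamWeight * M * S.card / φ ^ 2 :=
  weighted_lasso_estimation_mixed_general n p X f0 w hw lamInit lamWeight hlamInit hlamWeight S L M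
    hL hM hwmin hwS φ hφ hRE βw hβw β
end

section
/- Suppose w_j > 0 for all j ∈ {1,…,p}. Let β_weight be any weighted Lasso solution, S_weight := {j : (β_weight)_j ≠ 0}, and let S₀ ⊆ {1,…,p} be an arbitrary index set. Let Λ ≥ 0 satisfy ‖Xγ‖_n ≤ Λ‖γ‖_2 for every γ ∈ ℝ^p supported on S_weight∖S₀. Then |S_weight∖S₀|² ≤ 4Λ² · (‖Xβ_weight − f⁰‖_n²/λ_weight²) · (Σ_{j∈S_weight∖S₀} w_j^{−2})/λ_init². -/
open Finset

lemma aux_zero_of_quad (A C ε : ℝ) (hC : 0 ≤ C) (hε : 0 < ε)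
    (h : ∀ t : ℝ, |t| < ε → 0 ≤ t * A + t ^ 2 * C) : A = 0 := by
  by_contra hA
  have habs : 0 < |A| := abs_pos.2 hA
  set s := min (ε / 2) (|A| / (2 * C + 2)) with hs
  have hs0 : 0 < s := lt_min (by linarith) (by positivity)
  have hsε : s < ε := lt_of_le_of_lt (min_le_left _ _) (by linarith)
  have hsC : s ≤ |A| / (2 * C + 2) := min_le_right _ _
  have h2 : s * (2 * C + 2) ≤ |A| := (le_div_iff₀ (by linarith)).1 hsC
  rcases lt_or_gt_of_ne hA with h1 | h1
  · have hq := h s (by rw [abs_of_pos hs0]; exact hsε)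
    rw [abs_of_neg h1] at h2
    nlinarith [mul_le_mul_of_nonneg_left h2 hs0.le]
  · have hq := h (-s) (by rw [abs_neg, abs_of_pos hs0]; exact hsε)
    rw [abs_of_pos h1] at h2
    nlinarith [mul_le_mul_of_nonneg_left h2 hs0.le]

lemma abs_add_of_small (x t : ℝ) (hx : x ≠ 0) (ht : |t| < |x|) :
    |x + t| = |x| + Real.sign x * t := by
  obtain ⟨ht1, ht2⟩ := abs_lt.1 ht
  rcases lt_or_gt_of_ne hx with h | h
  · rw [abs_of_neg h] at ht1 ht2 ⊢
    rw [Real.sign_of_neg h, abs_of_neg (by linarith)]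
    ring
  · rw [abs_of_pos h] at ht1 ht2 ⊢
    rw [Real.sign_of_pos h, abs_of_pos (by linarith)]
    ring

lemma real_sign_mul_self (x : ℝ) (hx : x ≠ 0) : Real.sign x * Real.sign x = 1 := by
  rcases lt_or_gt_of_ne hx with h | h
  · rw [Real.sign_of_neg h]; norm_num
  · rw [Real.sign_of_pos h]; norm_num

/-- First part of Lemma `weightselect`: bound on the number of false positives of
the noiseless weighted Lasso. -/
theorem weighted_lasso_false_positives
    (n p : ℕ) (hn : 0 < n)
    (X : Matrix (Fin n) (Fin p) ℝ) (f0 : Fin n → ℝ)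
    (w : Fin p → ℝ) (hw : ∀ j, 0 < w j)
    (lamInit lamWeight : ℝ) (hlamInit : 0 < lamInit) (hlamWeight : 0 < lamWeight)
    (βw : Fin p → ℝ)
    (hβw : ∀ β : Fin p → ℝ,
      (∑ i, (X.mulVec βw i - f0 i) ^ 2) / n + lamInit * lamWeight * ∑ j, w j * |βw j|
        ≤ (∑ i, (X.mulVec β i - f0 i) ^ 2) / n + lamInit * lamWeight * ∑ j, w j * |β j|)
    (Sw : Finset (Fin p)) (hSw : ∀ j, j ∈ Sw ↔ βw j ≠ 0)
    (S0 : Finset (Fin p))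
    (Λ : ℝ) (hΛ0 : 0 ≤ Λ)
    (hΛ : ∀ γ : Fin p → ℝ, (∀ j ∉ Sw \ S0, γ j = 0) →
      Real.sqrt ((∑ i, (X.mulVec γ i) ^ 2) / n) ≤ Λ * Real.sqrt (∑ j, (γ j) ^ 2)) :
    ((Sw \ S0).card : ℝ) ^ 2
      ≤ 4 * Λ ^ 2 * (((∑ i, (X.mulVec βw i - f0 i) ^ 2) / n) / lamWeight ^ 2)
          * (∑ j ∈ Sw \ S0, ((w j)⁻¹) ^ 2) / lamInit ^ 2 := by
  have hn' : (0 : ℝ) < n := by exact_mod_cast hn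
  set r : Fin n → ℝ := fun i => X.mulVec βw i - f0 i with hr
  set S : Finset (Fin p) := Sw \ S0 with hSdef
  set R : ℝ := (∑ i, r i ^ 2) / n with hR
  set Q : ℝ := ∑ j ∈ S, ((w j)⁻¹) ^ 2 with hQ
  -- KKT conditions
  have kkt : ∀ j ∈ Sw,
      2 / (n : ℝ) * (∑ i, X i j * r i)
        + lamInit * lamWeight * w j * Real.sign (βw j) = 0 := by
    intro j hj
    have hne : βw j ≠ 0 := (hSw j).1 hj
    apply aux_zero_of_quad _ ((∑ i, (X i j) ^ 2) / (n : ℝ)) (|βw j|)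
      (by positivity) (abs_pos.2 hne)
    intro t ht
    have h := hβw (Function.update βw j (βw j + t))
    have hmv : ∀ i, X.mulVec (Function.update βw j (βw j + t)) i
        = X.mulVec βw i + t * X i j := by
      intro i
      simp only [Matrix.mulVec, dotProduct]
      have : ∀ k ∈ Finset.univ, X i k * Function.update βw j (βw j + t) k
          = X i k * βw k + (if k = j then t * X i j else 0) := by
        intro k _
        by_cases hk : k = j
        · subst hk; simp [Function.update]; ring
        · simp [Function.update, hk]
      rw [Finset.sum_congr rfl this, Finset.sum_add_distrib, Finset.sum_ite_eq' Finset.univ j]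
      simp
    have hq : ∑ i, (X.mulVec (Function.update βw j (βw j + t)) i - f0 i) ^ 2
        = ∑ i, r i ^ 2 + t * (2 * ∑ i, X i j * r i) + t ^ 2 * ∑ i, (X i j) ^ 2 := by
      calc ∑ i, (X.mulVec (Function.update βw j (βw j + t)) i - f0 i) ^ 2
          = ∑ i, (r i ^ 2 + t * (2 * (X i j * r i)) + t ^ 2 * (X i j) ^ 2) := by
            refine Finset.sum_congr rfl fun i _ => ?_
            rw [hmv i]
            have hri : r i = X.mulVec βw i - f0 i := rfl
            rw [hri]; ring
        _ = ∑ i, r i ^ 2 + t * (2 * ∑ i, X i j * r i) + t ^ 2 * ∑ i, (X i j) ^ 2 := by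
            rw [Finset.sum_add_distrib, Finset.sum_add_distrib, Finset.mul_sum,
              Finset.mul_sum, ← Finset.mul_sum, ← Finset.mul_sum, ← Finset.mul_sum]
    have hpen : ∑ k, w k * |Function.update βw j (βw j + t) k|
        = (∑ k, w k * |βw k|) + (w j * |βw j + t| - w j * |βw j|) := by
      have hdiff : ∑ k, (w k * |Function.update βw j (βw j + t) k| - w k * |βw k|)
          = w j * |βw j + t| - w j * |βw j| := by
        rw [Finset.sum_eq_single j]
        · simp [Function.update]
        · intro k _ hk; simp [Function.update, hk]
        · intro hj'; exact absurd (Finset.mem_univ j) hj'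
      rw [Finset.sum_sub_distrib] at hdiff
      linarith
    have habs : |βw j + t| = |βw j| + Real.sign (βw j) * t :=
      abs_add_of_small _ _ hne ht
    rw [hq, hpen, habs] at h
    have hexp : (∑ i, r i ^ 2 + t * (2 * ∑ i, X i j * r i) + t ^ 2 * ∑ i, (X i j) ^ 2) / (n : ℝ)
        = (∑ i, r i ^ 2) / n + t * (2 / (n : ℝ) * ∑ i, X i j * r i)
          + t ^ 2 * ((∑ i, (X i j) ^ 2) / n) := by
      field_simp
    rw [hexp] at h
    nlinarith [h]
  -- support of the test vector
  set γ : Fin p → ℝ := fun j => if j ∈ S then Real.sign (βw j) * (w j)⁻¹ else 0 with hγ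
  have hsupp : ∀ j ∉ S, γ j = 0 := by
    intro j hj; simp only [hγ, if_neg hj]
  -- key identity
  have hswap : ∑ i, X.mulVec γ i * r i = ∑ j, γ j * ∑ i, X i j * r i := by
    simp only [Matrix.mulVec, dotProduct, Finset.sum_mul]
    rw [Finset.sum_comm]
    refine Finset.sum_congr rfl fun j _ => ?_
    rw [Finset.mul_sum]
    exact Finset.sum_congr rfl fun i _ => by ring
  have key1 : lamInit * lamWeight * (S.card : ℝ)
      = -(2 / (n : ℝ)) * ∑ i, X.mulVec γ i * r i := by
    rw [hswap]
    symm
    calc -(2 / (n : ℝ)) * ∑ j, γ j * ∑ i, X i j * r i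
        = ∑ j, γ j * (-(2 / (n : ℝ)) * ∑ i, X i j * r i) := by
          rw [Finset.mul_sum]; exact Finset.sum_congr rfl fun j _ => by ring
      _ = ∑ j ∈ S, γ j * (-(2 / (n : ℝ)) * ∑ i, X i j * r i) := by
          refine (Finset.sum_subset (Finset.subset_univ S) fun j _ hj => ?_).symm
          rw [hsupp j hj, zero_mul]
      _ = ∑ j ∈ S, lamInit * lamWeight := by
          refine Finset.sum_congr rfl fun j hj => ?_
          have hjSw : j ∈ Sw := (Finset.mem_sdiff.1 hj).1
          have hne : βw j ≠ 0 := (hSw j).1 hjSw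
          have hk := kkt j hjSw
          have hT : -(2 / (n : ℝ)) * ∑ i, X i j * r i
              = lamInit * lamWeight * w j * Real.sign (βw j) := by linarith
          rw [hT]
          simp only [hγ, if_pos hj]
          have hs := real_sign_mul_self (βw j) hne
          have hwj : (w j)⁻¹ * w j = 1 := inv_mul_cancel₀ (hw j).ne'
          linear_combination (lamInit * lamWeight * (w j)⁻¹ * w j) * hs
            + (lamInit * lamWeight) * hwj
      _ = (S.card : ℝ) * (lamInit * lamWeight) := by
          rw [Finset.sum_const, nsmul_eq_mul]
      _ = lamInit * lamWeight * (S.card : ℝ) := by ring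
  -- sum of squares of γ
  have hγsq : ∑ j, γ j ^ 2 = Q := by
    calc ∑ j, γ j ^ 2 = ∑ j ∈ S, γ j ^ 2 := by
          refine (Finset.sum_subset (Finset.subset_univ S) fun j _ hj => ?_).symm
          rw [hsupp j hj]; ring
      _ = Q := by
          refine Finset.sum_congr rfl fun j hj => ?_
          have hne : βw j ≠ 0 := (hSw j).1 (Finset.mem_sdiff.1 hj).1
          have hs := real_sign_mul_self (βw j) hne
          simp only [hγ, if_pos hj]
          linear_combination ((w j)⁻¹) ^ 2 * hs
  -- bound on design applied to γ
  have h3 : (∑ i, (X.mulVec γ i) ^ 2) / (n : ℝ) ≤ Λ ^ 2 * Q := by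
    have h := hΛ γ hsupp
    have h1 : (0 : ℝ) ≤ (∑ i, (X.mulVec γ i) ^ 2) / (n : ℝ) := by positivity
    calc (∑ i, (X.mulVec γ i) ^ 2) / (n : ℝ)
        = Real.sqrt ((∑ i, (X.mulVec γ i) ^ 2) / (n : ℝ)) ^ 2 := (Real.sq_sqrt h1).symm
      _ ≤ (Λ * Real.sqrt (∑ j, γ j ^ 2)) ^ 2 :=
          pow_le_pow_left₀ (Real.sqrt_nonneg _) h 2
      _ = Λ ^ 2 * (∑ j, γ j ^ 2) := by
          rw [mul_pow, Real.sq_sqrt (by positivity)]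
      _ = Λ ^ 2 * Q := by rw [hγsq]
  have hA' : ∑ i, (X.mulVec γ i) ^ 2 ≤ (n : ℝ) * (Λ ^ 2 * Q) := by
    rw [div_le_iff₀ hn'] at h3; linarith [h3]
  have hcs := Finset.sum_mul_sq_le_sq_mul_sq Finset.univ (fun i => X.mulVec γ i) r
  have hB : (0 : ℝ) ≤ ∑ i, r i ^ 2 := by positivity
  have key2 : (lamInit * lamWeight * (S.card : ℝ)) ^ 2 ≤ 4 * Λ ^ 2 * Q * R := by
    rw [key1]
    have step : (∑ i, X.mulVec γ i * r i) ^ 2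
        ≤ ((n : ℝ) * (Λ ^ 2 * Q)) * ∑ i, r i ^ 2 :=
      le_trans hcs (mul_le_mul_of_nonneg_right hA' hB)
    calc (-(2 / (n : ℝ)) * ∑ i, X.mulVec γ i * r i) ^ 2
        = (4 / (n : ℝ) ^ 2) * (∑ i, X.mulVec γ i * r i) ^ 2 := by ring
      _ ≤ (4 / (n : ℝ) ^ 2) * (((n : ℝ) * (Λ ^ 2 * Q)) * ∑ i, r i ^ 2) := by
          apply mul_le_mul_of_nonneg_left step (by positivity)
      _ = 4 * Λ ^ 2 * Q * R := by
          rw [hR]; field_simp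
  have key3 : (S.card : ℝ) ^ 2 * (lamInit ^ 2 * lamWeight ^ 2) ≤ 4 * Λ ^ 2 * Q * R := by
    calc (S.card : ℝ) ^ 2 * (lamInit ^ 2 * lamWeight ^ 2)
        = (lamInit * lamWeight * (S.card : ℝ)) ^ 2 := by ring
      _ ≤ 4 * Λ ^ 2 * Q * R := key2
  have hgoal : (4 : ℝ) * Λ ^ 2 * (R / lamWeight ^ 2) * Q / lamInit ^ 2
      = (4 * Λ ^ 2 * Q * R) / (lamInit ^ 2 * lamWeight ^ 2) := by
    field_simp
  show ((S.card : ℝ)) ^ 2 ≤ 4 * Λ ^ 2 * (R / lamWeight ^ 2) * Q / lamInit ^ 2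
  rw [hgoal, le_div_iff₀ (by positivity)]
  exact key3
end

section
/- Let β_init be any minimizer over ℝ^p of β ↦ ‖Xβ − f⁰‖_n² + λ_init‖β‖_1 (λ_init > 0). Let S₀ ⊆ {1,…,p} be nonempty with s₀ := |S₀|, and let b⁰ ∈ ℝ^p be supported on S₀ with Xb⁰ equal to the orthogonal projection of f⁰ onto span{ψ_j : j ∈ S₀}. Let φ > 0 satisfy ‖Xγ‖_n ≥ φ‖γ_{S₀}‖_2 for every γ ∈ ℝ^p with ‖γ_{S₀^c}‖_1 ≤ 2√s₀·‖γ_{S₀}‖_2, and set δ_oracle² := ‖Xb⁰ − f⁰‖_n² + 3λ_init²·s₀/φ². Then ‖Xβ_init − f⁰‖_n² ≤ 2δ_oracle². -/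
open Finset

lemma sum_mul_le_sqrt_mul_sqrt {ι : Type*} (s : Finset ι) (f g : ι → ℝ) :
    ∑ i ∈ s, f i * g i ≤ Real.sqrt (∑ i ∈ s, f i ^ 2) * Real.sqrt (∑ i ∈ s, g i ^ 2) := by
  have h := Finset.sum_mul_sq_le_sq_mul_sq s f g
  have h1 : ∑ i ∈ s, f i * g i ≤ Real.sqrt ((∑ i ∈ s, f i * g i) ^ 2) := by
    rw [Real.sqrt_sq_eq_abs]; exact le_abs_self _
  calc ∑ i ∈ s, f i * g i ≤ Real.sqrt ((∑ i ∈ s, f i * g i) ^ 2) := h1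
    _ ≤ Real.sqrt ((∑ i ∈ s, f i ^ 2) * ∑ i ∈ s, g i ^ 2) := Real.sqrt_le_sqrt h
    _ = _ := Real.sqrt_mul (Finset.sum_nonneg fun i _ => sq_nonneg _) _

lemma sqrt_sub_triangle (n : ℕ) (x y : Fin n → ℝ) :
    Real.sqrt ((∑ i, (x i - y i) ^ 2) / n)
      ≤ Real.sqrt ((∑ i, x i ^ 2) / n) + Real.sqrt ((∑ i, y i ^ 2) / n) := by
  set a := ∑ i, x i ^ 2 with ha
  set b := ∑ i, y i ^ 2 with hb
  have ha0 : 0 ≤ a := Finset.sum_nonneg fun i _ => sq_nonneg _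
  have hb0 : 0 ≤ b := Finset.sum_nonneg fun i _ => sq_nonneg _
  have hcs : ∑ i, x i * (-(y i)) ≤ Real.sqrt a * Real.sqrt b := by
    have := sum_mul_le_sqrt_mul_sqrt Finset.univ x (fun i => -(y i))
    simpa [ha, hb] using this
  have hexp : ∑ i, (x i - y i) ^ 2 ≤ (Real.sqrt a + Real.sqrt b) ^ 2 := by
    have h1 : ∑ i, (x i - y i) ^ 2 = a + b + 2 * ∑ i, x i * (-(y i)) := by
      rw [ha, hb, Finset.mul_sum, ← Finset.sum_add_distrib, ← Finset.sum_add_distrib]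
      exact Finset.sum_congr rfl fun i _ => by ring
    have h2 : (Real.sqrt a) ^ 2 = a := Real.sq_sqrt ha0
    have h3 : (Real.sqrt b) ^ 2 = b := Real.sq_sqrt hb0
    nlinarith [hcs]
  have hn0 : (0:ℝ) ≤ (n : ℝ) := Nat.cast_nonneg n
  calc Real.sqrt ((∑ i, (x i - y i) ^ 2) / n)
      ≤ Real.sqrt ((Real.sqrt a + Real.sqrt b) ^ 2 / n) := by
        apply Real.sqrt_le_sqrt; gcongr
    _ = (Real.sqrt a + Real.sqrt b) / Real.sqrt n := by
        rw [Real.sqrt_div (sq_nonneg _), Real.sqrt_sq (by positivity)]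
    _ = Real.sqrt (a / n) + Real.sqrt (b / n) := by
        rw [Real.sqrt_div ha0, Real.sqrt_div hb0, add_div]

/-- Prediction-error bound of Corollary `init.corollary` for the noiseless initial Lasso. -/
theorem initial_lasso_prediction
    (n p : ℕ) (hn : 0 < n)
    (X : Matrix (Fin n) (Fin p) ℝ) (f0 : Fin n → ℝ)
    (lamInit : ℝ) (hlamInit : 0 < lamInit)
    (βinit : Fin p → ℝ)
    (hβinit : ∀ β : Fin p → ℝ,
      (∑ i, (X.mulVec βinit i - f0 i) ^ 2) / n + lamInit * ∑ j, |βinit j|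
        ≤ (∑ i, (X.mulVec β i - f0 i) ^ 2) / n + lamInit * ∑ j, |β j|)
    (S0 : Finset (Fin p)) (hS0 : S0.Nonempty)
    (b0 : Fin p → ℝ)
    (hb0supp : ∀ j ∉ S0, b0 j = 0)
    (hb0proj : ∀ j ∈ S0, ∑ i, (X.mulVec b0 i - f0 i) * X i j = 0)
    (φ : ℝ) (hφ : 0 < φ)
    (hRE : ∀ γ : Fin p → ℝ,
      (∑ j ∈ S0ᶜ, |γ j|) ≤ 2 * Real.sqrt (S0.card) * Real.sqrt (∑ j ∈ S0, (γ j) ^ 2) →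
      φ * Real.sqrt (∑ j ∈ S0, (γ j) ^ 2) ≤ Real.sqrt ((∑ i, (X.mulVec γ i) ^ 2) / n))
    (δor2 : ℝ)
    (hδor2 : δor2 = (∑ i, (X.mulVec b0 i - f0 i) ^ 2) / n
        + 3 * lamInit ^ 2 * S0.card / φ ^ 2) :
    (∑ i, (X.mulVec βinit i - f0 i) ^ 2) / n ≤ 2 * δor2 := by
  set Δ : Fin p → ℝ := fun j => βinit j - b0 j with hΔdef
  set A : ℝ := (∑ i, (X.mulVec βinit i - f0 i) ^ 2) / n with hA
  set B : ℝ := (∑ i, (X.mulVec b0 i - f0 i) ^ 2) / n with hB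
  have hA0 : 0 ≤ A := by rw [hA]; positivity
  have hB0 : 0 ≤ B := by rw [hB]; positivity
  set T : ℝ := ∑ j ∈ S0, |Δ j| with hT
  set Tc : ℝ := ∑ j ∈ S0ᶜ, |Δ j| with hTc
  have hT0 : 0 ≤ T := Finset.sum_nonneg fun j _ => abs_nonneg _
  have hTc0 : 0 ≤ Tc := Finset.sum_nonneg fun j _ => abs_nonneg _
  have hk0 : (0:ℝ) ≤ lamInit ^ 2 * S0.card / φ ^ 2 := by positivity
  -- Basic inequality
  have step1 : A + lamInit * Tc ≤ B + lamInit * T := by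
    have hbasic := hβinit b0
    have hs1 : ∑ j, |βinit j| = ∑ j ∈ S0, |βinit j| + ∑ j ∈ S0ᶜ, |βinit j| :=
      (Finset.sum_add_sum_compl S0 _).symm
    have hs2 : ∑ j, |b0 j| = ∑ j ∈ S0, |b0 j| := by
      rw [← Finset.sum_add_sum_compl S0 fun j => |b0 j|]
      have : ∑ j ∈ S0ᶜ, |b0 j| = 0 :=
        Finset.sum_eq_zero fun j hj => by
          rw [hb0supp j (Finset.mem_compl.mp hj), abs_zero]
      rw [this, add_zero]
    have hs3 : ∑ j ∈ S0ᶜ, |βinit j| = Tc := by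
      refine Finset.sum_congr rfl fun j hj => ?_
      have hz := hb0supp j (Finset.mem_compl.mp hj)
      simp [hΔdef, hz]
    have hs4 : ∑ j ∈ S0, |b0 j| ≤ ∑ j ∈ S0, |βinit j| + T := by
      rw [hT, ← Finset.sum_add_distrib]
      refine Finset.sum_le_sum fun j _ => ?_
      have : b0 j = βinit j - Δ j := by simp [hΔdef]
      rw [this]; exact abs_sub _ _
    rw [hs1, hs2] at hbasic
    have h5 : lamInit * ∑ j ∈ S0, |b0 j| ≤ lamInit * (∑ j ∈ S0, |βinit j| + T) :=
      mul_le_mul_of_nonneg_left hs4 hlamInit.le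
    rw [hs3] at hbasic
    nlinarith [hbasic, h5]
  rw [hδor2]
  by_cases hcase : lamInit * T ≤ B
  · -- small case: A ≤ 2B
    have h0 : 0 ≤ lamInit * Tc := mul_nonneg hlamInit.le hTc0
    have heq : 2 * (B + 3 * lamInit ^ 2 * (S0.card : ℝ) / φ ^ 2)
        = 2 * B + 6 * (lamInit ^ 2 * (S0.card : ℝ) / φ ^ 2) := by ring
    linarith [step1, hcase, h0, hk0, heq]
  · push_neg at hcase
    -- RE applicable
    set r : ℝ := Real.sqrt (∑ j ∈ S0, (Δ j) ^ 2) with hr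
    have hr0 : 0 ≤ r := Real.sqrt_nonneg _
    have hCS : T ≤ Real.sqrt S0.card * r := by
      have h := sum_mul_le_sqrt_mul_sqrt S0 (fun _ => (1:ℝ)) (fun j => |Δ j|)
      have e1 : ∑ j ∈ S0, (1:ℝ) * |Δ j| = T := by rw [hT]; exact Finset.sum_congr rfl fun j _ => one_mul _
      have e2 : ∑ j ∈ S0, ((1:ℝ)) ^ 2 = (S0.card : ℝ) := by simp
      have e3 : ∑ j ∈ S0, |Δ j| ^ 2 = ∑ j ∈ S0, (Δ j) ^ 2 :=
        Finset.sum_congr rfl fun j _ => sq_abs _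
      rw [e1, e2, e3] at h
      exact h
    have hTcle : Tc ≤ 2 * T := by
      have : lamInit * Tc ≤ lamInit * (2 * T) := by nlinarith
      exact le_of_mul_le_mul_left this hlamInit
    have hREhyp : Tc ≤ 2 * Real.sqrt S0.card * r := by
      calc Tc ≤ 2 * T := hTcle
        _ ≤ 2 * (Real.sqrt S0.card * r) := by nlinarith
        _ = 2 * Real.sqrt S0.card * r := by ring
    have hre := hRE Δ hREhyp
    -- triangle inequality
    have hmv : ∀ i, X.mulVec Δ i = (X.mulVec βinit i - f0 i) - (X.mulVec b0 i - f0 i) := by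
      intro i
      have : X.mulVec Δ = X.mulVec βinit - X.mulVec b0 := by
        have : Δ = βinit - b0 := rfl
        rw [this, Matrix.mulVec_sub]
      simp only [this, Pi.sub_apply]; ring
    have htri : Real.sqrt ((∑ i, (X.mulVec Δ i) ^ 2) / n) ≤ Real.sqrt A + Real.sqrt B := by
      have h := sqrt_sub_triangle n (fun i => X.mulVec βinit i - f0 i)
        (fun i => X.mulVec b0 i - f0 i)
      have e : ∑ i, (X.mulVec Δ i) ^ 2
          = ∑ i, ((X.mulVec βinit i - f0 i) - (X.mulVec b0 i - f0 i)) ^ 2 :=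
        Finset.sum_congr rfl fun i _ => by rw [hmv i]
      rw [e]
      exact h
    -- combine
    set sA : ℝ := Real.sqrt A with hsA
    set sB : ℝ := Real.sqrt B with hsB
    have hsA0 : 0 ≤ sA := Real.sqrt_nonneg _
    have hsB0 : 0 ≤ sB := Real.sqrt_nonneg _
    have hsA2 : sA ^ 2 = A := Real.sq_sqrt hA0
    have hsB2 : sB ^ 2 = B := Real.sq_sqrt hB0
    set c : ℝ := lamInit * Real.sqrt S0.card / φ with hc
    have hc0 : 0 ≤ c := by positivity
    have hφr : φ * r ≤ sA + sB := le_trans hre htri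
    have hlamT : lamInit * T ≤ c * (sA + sB) := by
      have h1 : lamInit * T ≤ lamInit * (Real.sqrt S0.card * r) :=
        mul_le_mul_of_nonneg_left hCS hlamInit.le
      have h2 : lamInit * (Real.sqrt S0.card * r) = c * (φ * r) := by
        rw [hc]; field_simp
      have h3 : c * (φ * r) ≤ c * (sA + sB) := mul_le_mul_of_nonneg_left hφr hc0
      linarith
    have hkey : A ≤ B + c * (sA + sB) := by
      have : 0 ≤ lamInit * Tc := mul_nonneg hlamInit.le hTc0
      linarith
    have hu : sA ≤ sB + c := by
      by_contra hcon
      push_neg at hcon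
      have hprod : 0 < (sA - (sB + c)) * (sA + sB) :=
        mul_pos (by linarith) (by linarith)
      have hexp : (sA - (sB + c)) * (sA + sB) = sA ^ 2 - sB ^ 2 - c * sA - c * sB := by
        ring
      rw [hexp] at hprod
      linarith only [hprod, hkey, hsA2, hsB2]
    have hc2 : c ^ 2 = lamInit ^ 2 * S0.card / φ ^ 2 := by
      have hsq : (Real.sqrt (S0.card : ℝ)) ^ 2 = (S0.card : ℝ) :=
        Real.sq_sqrt (Nat.cast_nonneg _)
      rw [hc, div_pow, mul_pow, hsq]
    have hfin : A ≤ 2 * B + 2 * c ^ 2 := by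
      have h1 : sA ^ 2 ≤ (sB + c) ^ 2 := pow_le_pow_left₀ hsA0 hu 2
      have h2 : (sB - c) ^ 2 = sB ^ 2 - 2 * (sB * c) + c ^ 2 := by ring
      have h3 : (sB + c) ^ 2 = sB ^ 2 + 2 * (sB * c) + c ^ 2 := by ring
      linarith only [h1, sq_nonneg (sB - c), h2, h3, hsA2, hsB2]
    have heq : 2 * (B + 3 * lamInit ^ 2 * (S0.card : ℝ) / φ ^ 2)
        = 2 * B + 6 * (lamInit ^ 2 * (S0.card : ℝ) / φ ^ 2) := by ring
    linarith [hfin, hc2, hk0, heq]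
end

section
/- Let β_init be any minimizer over ℝ^p of β ↦ ‖Xβ − f⁰‖_n² + λ_init‖β‖_1 (λ_init > 0). Let S₀ ⊆ {1,…,p} be nonempty with s₀ := |S₀|, and let b⁰ ∈ ℝ^p be supported on S₀ with Xb⁰ the orthogonal projection of f⁰ onto span{ψ_j : j ∈ S₀}. (i) If φ > 0 satisfies ‖Xγ‖_n ≥ φ‖γ_{S₀}‖_2 for every γ with ‖γ_{S₀^c}‖_1 ≤ 2√s₀·‖γ_{S₀}‖_2, then ‖β_init − b⁰‖_1 ≤ 3‖Xb⁰ − f⁰‖_n²/λ_init + 3λ_init·s₀/φ². (ii) If φ' > 0 is such that for every index set 𝒩 with S₀ ⊆ 𝒩 and |𝒩| ≤ 2s₀, and every γ with ‖γ_{𝒩^c}‖_1 ≤ 2√|𝒩|·‖γ_𝒩‖_2 and max_{j∉𝒩}|γ_j| ≤ min_{j∈𝒩∖S₀}|γ_j|, one has ‖Xγ‖_n ≥ φ'‖γ_𝒩‖_2, then ‖β_init − b⁰‖_2 ≤ 6‖Xb⁰ − f⁰‖_n²/(λ_init·√s₀) + 12λ_init·√s₀/φ'². -/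
/-! Comparing the Lasso objective at `β̂` with its values on the segment towards `b⁰` gives the
first-order condition, and the polarization identity turns it into the basic inequality
`‖Xδ‖ₙ² + λ‖δ_{S₀ᶜ}‖₁ ≤ λ‖δ_{S₀}‖₁ + ‖Xb⁰ - f⁰‖ₙ²` for `δ = β̂ - b⁰`. Either `δ` lies in the cone
`‖δ_{S₀ᶜ}‖₁ ≤ 2√s₀ ‖δ_{S₀}‖₂`, where the restricted eigenvalue bound and completing the square
conclude, or the off-support part dominates and the basic inequality alone bounds it. For the
ℓ₂ bound the same dichotomy is run on `N = S₀ ∪ {the s₀ largest |δ_j| off S₀}`, whose complement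
carries ℓ₂-mass at most `‖δ_{S₀ᶜ}‖₁ / √s₀`. -/

open Finset Filter Topology Matrix

lemma le_of_forall_pos_le_mul_add {a T D : ℝ} (h : ∀ s, 0 < s → s ≤ 1 → a ≤ s * T + D) :
    a ≤ D := by
  have hlim : Tendsto (fun s => s * T + D) (𝓝[>] 0) (𝓝 D) := by
    have : Continuous fun s : ℝ => s * T + D := by fun_prop
    simpa using (this.tendsto 0).mono_left nhdsWithin_le_nhds
  exact ge_of_tendsto hlim <| by
    filter_upwards [Ioc_mem_nhdsGT one_pos] with s hs using h s hs.1 hs.2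

section Lasso

variable {ι κ : Type*} [Fintype ι] [Fintype κ]

lemma convexOn_sum_abs : ConvexOn ℝ Set.univ fun β : κ → ℝ => ∑ j, |β j| := by
  refine ⟨convex_univ, fun x _ y _ a b ha hb _ => ?_⟩
  simp only [Pi.add_apply, Pi.smul_apply, smul_eq_mul, mul_sum, ← sum_add_distrib]
  gcongr with j
  calc |a * x j + b * y j| ≤ |a * x j| + |b * y j| := abs_add_le _ _
    _ = a * |x j| + b * |y j| := by rw [abs_mul, abs_mul, abs_of_nonneg ha, abs_of_nonneg hb]

lemma two_mul_sum_mul_div_le_of_isMin {X : Matrix ι κ ℝ} {y : ι → ℝ} {c : ℝ}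
    {g : (κ → ℝ) → ℝ} (hg : ConvexOn ℝ Set.univ g) {β₀ : κ → ℝ}
    (hmin : ∀ β, (∑ i, ((X *ᵥ β₀) i - y i) ^ 2) / c + g β₀
      ≤ (∑ i, ((X *ᵥ β) i - y i) ^ 2) / c + g β) (b : κ → ℝ) :
    2 * (∑ i, ((X *ᵥ β₀) i - y i) * (X *ᵥ (β₀ - b)) i) / c ≤ g b - g β₀ := by
  set r := X *ᵥ β₀ - y
  set w := X *ᵥ (β₀ - b)
  refine sub_nonpos.1 <| le_of_forall_pos_le_mul_add (T := (∑ i, w i ^ 2) / c) fun s hs hs1 => ?_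
  have hres : X *ᵥ ((1 - s) • β₀ + s • b) - y = r - s • w := by
    simp only [r, w, mulVec_add, mulVec_smul, mulVec_sub]
    module
  have hquad : ∑ i, (r i - s * w i) ^ 2
      = ∑ i, r i ^ 2 - s * (2 * ∑ i, r i * w i) + s * (s * ∑ i, w i ^ 2) := by
    simp only [mul_sum, ← sum_sub_distrib, ← sum_add_distrib]
    exact sum_congr rfl fun i _ => by ring
  have hconv := hg.2 (Set.mem_univ β₀) (Set.mem_univ b) (sub_nonneg.2 hs1) hs.le (by ring)
  have hcmp := hmin ((1 - s) • β₀ + s • b)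
  simp only [smul_eq_mul] at hconv
  have hres' : ∀ i, (X *ᵥ ((1 - s) • β₀ + s • b)) i - y i = r i - s * w i :=
    fun i => congrFun hres i
  have hr : ∀ i, (X *ᵥ β₀) i - y i = r i := fun _ => rfl
  simp only [hres', hr, hquad] at hcmp
  have hscaled : s * (2 * (∑ i, r i * w i) / c - (g b - g β₀))
      ≤ s * (s * ((∑ i, w i ^ 2) / c) + 0) := by
    simp only [add_div, sub_div, mul_div_assoc] at hcmp ⊢
    linarith
  exact le_of_mul_le_mul_left hscaled hs

lemma sum_abs_sub_sum_abs_le_of_support [DecidableEq κ] {S : Finset κ} {b : κ → ℝ}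
    (hb : ∀ j ∉ S, b j = 0) (β : κ → ℝ) :
    ∑ j, |b j| - ∑ j, |β j| ≤ ∑ j ∈ S, |β j - b j| - ∑ j ∈ Sᶜ, |β j - b j| := by
  rw [← sum_add_sum_compl S fun j => |b j|, ← sum_add_sum_compl S fun j => |β j|]
  have hb0 : ∑ j ∈ Sᶜ, |b j| = 0 := sum_eq_zero fun j hj => by simp [hb j (mem_compl.1 hj)]
  have hoff : ∑ j ∈ Sᶜ, |β j - b j| = ∑ j ∈ Sᶜ, |β j| :=
    sum_congr rfl fun j hj => by simp [hb j (mem_compl.1 hj)]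
  have hon : ∑ j ∈ S, |b j| - ∑ j ∈ S, |β j| ≤ ∑ j ∈ S, |β j - b j| := by
    rw [← sum_sub_distrib]
    gcongr with j
    exact (abs_sub_abs_le_abs_sub _ _).trans (abs_sub_comm _ _).le
  linarith

lemma lasso_basic_inequality [DecidableEq κ] {X : Matrix ι κ ℝ} {y : ι → ℝ} {c : ℝ}
    (hc : 0 ≤ c) {lam : ℝ} (hlam : 0 ≤ lam) {β₀ : κ → ℝ}
    (hmin : ∀ β, (∑ i, ((X *ᵥ β₀) i - y i) ^ 2) / c + lam * ∑ j, |β₀ j|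
      ≤ (∑ i, ((X *ᵥ β) i - y i) ^ 2) / c + lam * ∑ j, |β j|)
    {S : Finset κ} {b : κ → ℝ} (hb : ∀ j ∉ S, b j = 0) :
    (∑ i, (X *ᵥ (β₀ - b)) i ^ 2) / c + lam * ∑ j ∈ Sᶜ, |β₀ j - b j|
      ≤ lam * ∑ j ∈ S, |β₀ j - b j| + (∑ i, ((X *ᵥ b) i - y i) ^ 2) / c := by
  have hfirst := two_mul_sum_mul_div_le_of_isMin (convexOn_sum_abs.smul hlam) hmin b
  have hpolar : ∑ i, ((X *ᵥ b) i - y i) ^ 2 = ∑ i, ((X *ᵥ β₀) i - y i) ^ 2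
      - 2 * ∑ i, ((X *ᵥ β₀) i - y i) * (X *ᵥ (β₀ - b)) i + ∑ i, (X *ᵥ (β₀ - b)) i ^ 2 := by
    simp only [mulVec_sub, mul_sum, ← sum_sub_distrib, ← sum_add_distrib]
    exact sum_congr rfl fun i _ => by simp only [Pi.sub_apply]; ring
  have hres : 0 ≤ (∑ i, ((X *ᵥ β₀) i - y i) ^ 2) / c := by positivity
  have hsplit := mul_le_mul_of_nonneg_left (sum_abs_sub_sum_abs_le_of_support hb β₀) hlam
  simp only [smul_eq_mul] at hfirst
  rw [hpolar]
  simp only [add_div, sub_div, mul_sub] at hfirst hsplit ⊢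
  linarith

end Lasso

lemma add_le_of_basic_inequality {T A B R lam σ v φ : ℝ} (hT : 0 ≤ T) (hR : 0 ≤ R) (hlam : 0 < lam)
    (hv : 0 ≤ v) (hφ : 0 < φ) (hbasic : T + lam * B ≤ lam * A + R) (hA : A ≤ σ * v)
    (hcone : B ≤ 2 * σ * v → φ * v ≤ √T) :
    σ * v + B ≤ 3 * R / lam + lam * σ ^ 2 / φ ^ 2 := by
  have hlamA : lam * A ≤ lam * (σ * v) := mul_le_mul_of_nonneg_left hA hlam.le
  have hrhs : 3 * R / lam + lam * σ ^ 2 / φ ^ 2 = (3 * R + (lam * σ / φ) ^ 2) / lam := by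
    field_simp
  rw [hrhs, le_div_iff₀' hlam]
  by_cases h : B ≤ 2 * σ * v
  · have hTv : (φ * v) ^ 2 ≤ T := by
      simpa [Real.sq_sqrt hT] using pow_le_pow_left₀ (by positivity) (hcone h) 2
    -- `2 lam σ v - (φ v)^2 ≤ (lam σ / φ)^2`, completing the square
    have hk : lam * σ / φ * φ * v = lam * σ * v := by field_simp
    nlinarith [sq_nonneg (lam * σ / φ - φ * v)]
  · have hB : lam * (σ * v) ≤ lam * B / 2 := by nlinarith
    nlinarith [sq_nonneg (lam * σ / φ)]

lemma sqrt_add_le_sqrt_add_sqrt {x y : ℝ} (hx : 0 ≤ x) (hy : 0 ≤ y) : √(x + y) ≤ √x + √y := by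
  rw [Real.sqrt_le_left (by positivity)]
  nlinarith [Real.sq_sqrt hx, Real.sq_sqrt hy, mul_nonneg (Real.sqrt_nonneg x) (Real.sqrt_nonneg y)]

lemma sum_abs_le_sqrt_card_mul_sqrt_sum_sq {α : Type*} (s : Finset α) (f : α → ℝ) :
    ∑ j ∈ s, |f j| ≤ √(s.card : ℝ) * √(∑ j ∈ s, f j ^ 2) := by
  rw [← Real.sqrt_mul (by positivity), Real.le_sqrt (by positivity) (by positivity)]
  simpa only [sq_abs] using sq_sum_le_card_mul_sum_sq (s := s) (f := fun j => |f j|)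

lemma exists_subset_card_eq_forall_le {α β : Type*} [DecidableEq α] [LinearOrder β]
    (s : Finset α) (f : α → β) {m : ℕ} (hm : m ≤ s.card) :
    ∃ M ⊆ s, M.card = m ∧ ∀ j ∈ s \ M, ∀ k ∈ M, f j ≤ f k := by
  induction m with
  | zero => exact ⟨∅, empty_subset _, rfl, by simp⟩
  | succ m ih =>
    obtain ⟨M, hMs, hMc, hMtop⟩ := ih (by omega)
    obtain ⟨k, hk, hkmax⟩ := exists_max_image (s \ M) f <| by
      rw [← card_pos, card_sdiff_of_subset hMs]
      omega
    rw [Finset.mem_sdiff] at hk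
    refine ⟨insert k M, insert_subset hk.1 hMs, by rw [card_insert_of_notMem hk.2, hMc], ?_⟩
    intro j hj k' hk'
    have hjM : j ∈ s \ M := by
      simp only [Finset.mem_sdiff, mem_insert, not_or] at hj ⊢
      exact ⟨hj.1, hj.2.2⟩
    rcases mem_insert.1 hk' with rfl | hk'
    · exact hkmax j hjM
    · exact hMtop j hjM k' hk'

lemma card_mul_sum_sq_le_of_forall_abs_le {α : Type*} {M t : Finset α} {x : α → ℝ}
    (h : ∀ j ∈ t, ∀ k ∈ M, |x j| ≤ |x k|) :
    M.card * ∑ j ∈ t, x j ^ 2 ≤ (∑ k ∈ M, |x k|) * ∑ j ∈ t, |x j| := by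
  rw [mul_sum, mul_sum]
  refine sum_le_sum fun j hj => ?_
  calc (M.card : ℝ) * x j ^ 2 = (M.card • |x j|) * |x j| := by
        rw [nsmul_eq_mul, mul_assoc, abs_mul_abs_self, sq]
    _ ≤ (∑ k ∈ M, |x k|) * |x j| := by
        gcongr
        exact card_nsmul_le_sum M _ _ (h j hj)

lemma exists_superset_card_le_two_mul {α : Type*} [Fintype α] [DecidableEq α] (S : Finset α)
    (x : α → ℝ) :
    ∃ N, S ⊆ N ∧ N.card ≤ 2 * S.card ∧ (∀ j ∉ N, ∀ k ∈ N \ S, |x j| ≤ |x k|) ∧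
      S.card * ∑ j ∈ Nᶜ, x j ^ 2 ≤ (∑ j ∈ Sᶜ, |x j|) ^ 2 := by
  obtain ⟨M, hMS, hMc, hMtop⟩ :=
    exists_subset_card_eq_forall_le Sᶜ (fun j => |x j|) (min_le_right S.card Sᶜ.card)
  have hNc : (S ∪ M)ᶜ = Sᶜ \ M := by
    rw [compl_union, sdiff_eq_inter_compl]
  refine ⟨S ∪ M, subset_union_left, ?_, ?_, ?_⟩
  · have := card_union_le S M
    omega
  · intro j hj k hk
    rw [← mem_compl, hNc] at hj
    rw [union_sdiff_left, Finset.mem_sdiff] at hk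
    exact hMtop j hj k hk.1
  · rw [hNc]
    have hsplit := sum_sdiff hMS (f := fun j => |x j|)
    rcases le_total S.card Sᶜ.card with hS | hS
    · rw [min_eq_left hS] at hMc
      calc (S.card : ℝ) * ∑ j ∈ Sᶜ \ M, x j ^ 2
          ≤ (∑ j ∈ M, |x j|) * ∑ j ∈ Sᶜ \ M, |x j| := by
            rw [← hMc]
            exact card_mul_sum_sq_le_of_forall_abs_le hMtop
        _ ≤ (∑ j ∈ Sᶜ, |x j|) ^ 2 := by
            have := sum_nonneg fun j (_ : j ∈ M) => abs_nonneg (x j)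
            have := sum_nonneg fun j (_ : j ∈ Sᶜ \ M) => abs_nonneg (x j)
            nlinarith
    · rw [min_eq_right hS] at hMc
      rw [eq_of_subset_of_card_le hMS hMc.ge, sdiff_self, bot_eq_empty, sum_empty, mul_zero]
      positivity

lemma sqrt_sum_sq_le_of_card_mul_sum_sq_le {α : Type*} [Fintype α] [DecidableEq α]
    {N : Finset α} {x : α → ℝ} {s B : ℝ} (hs : 0 < s) (hB : 0 ≤ B)
    (htail : s * ∑ j ∈ Nᶜ, x j ^ 2 ≤ B ^ 2) :
    √(∑ j, x j ^ 2) ≤ √(∑ j ∈ N, x j ^ 2) + B / √s := by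
  rw [← sum_add_sum_compl N]
  refine (sqrt_add_le_sqrt_add_sqrt (by positivity) (by positivity)).trans (add_le_add le_rfl ?_)
  rw [← Real.sqrt_sq hB, ← Real.sqrt_div' _ hs.le]
  exact Real.sqrt_le_sqrt <| by rw [le_div_iff₀ hs]; linarith

section RestrictedEigenvalue

variable {α : Type*} [Fintype α] [DecidableEq α] {S : Finset α} {δ : α → ℝ} {T R lam : ℝ}

lemma sum_abs_le_of_basic_inequality {φ : ℝ} (hT : 0 ≤ T) (hR : 0 ≤ R) (hlam : 0 < lam)
    (hφ : 0 < φ) (hbasic : T + lam * ∑ j ∈ Sᶜ, |δ j| ≤ lam * ∑ j ∈ S, |δ j| + R)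
    (hRE : ∑ j ∈ Sᶜ, |δ j| ≤ 2 * √(S.card : ℝ) * √(∑ j ∈ S, δ j ^ 2) →
      φ * √(∑ j ∈ S, δ j ^ 2) ≤ √T) :
    ∑ j, |δ j| ≤ 3 * R / lam + lam * S.card / φ ^ 2 := by
  have key := add_le_of_basic_inequality hT hR hlam (Real.sqrt_nonneg _) hφ hbasic
    (sum_abs_le_sqrt_card_mul_sqrt_sum_sq S δ) hRE
  rw [Real.sq_sqrt (Nat.cast_nonneg _)] at key
  rw [← sum_add_sum_compl S]
  exact (add_le_add (sum_abs_le_sqrt_card_mul_sqrt_sum_sq S δ) le_rfl).trans key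

lemma sqrt_sum_sq_le_of_basic_inequality {φ : ℝ} (hS : S.Nonempty) (hT : 0 ≤ T) (hR : 0 ≤ R)
    (hlam : 0 < lam) (hφ : 0 < φ)
    (hbasic : T + lam * ∑ j ∈ Sᶜ, |δ j| ≤ lam * ∑ j ∈ S, |δ j| + R)
    (hRE : ∀ N : Finset α, S ⊆ N → N.card ≤ 2 * S.card →
      ∑ j ∈ Nᶜ, |δ j| ≤ 2 * √(N.card : ℝ) * √(∑ j ∈ N, δ j ^ 2) →
      (∀ j ∉ N, ∀ k ∈ N \ S, |δ j| ≤ |δ k|) → φ * √(∑ j ∈ N, δ j ^ 2) ≤ √T) :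
    √(∑ j, δ j ^ 2) ≤ 3 * R / (lam * √(S.card : ℝ)) + lam * √(S.card : ℝ) / φ ^ 2 := by
  set σ := √(S.card : ℝ)
  set B := ∑ j ∈ Sᶜ, |δ j|
  have hσ : 0 < σ := Real.sqrt_pos.2 (mod_cast hS.card_pos)
  obtain ⟨N, hSN, hNcard, horder, htail⟩ := exists_superset_card_le_two_mul S δ
  set U := √(∑ j ∈ N, δ j ^ 2)
  have hAU : ∑ j ∈ S, |δ j| ≤ σ * U :=
    (sum_abs_le_sqrt_card_mul_sqrt_sum_sq S δ).trans <| mul_le_mul_of_nonneg_left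
      (Real.sqrt_le_sqrt (sum_le_sum_of_subset_of_nonneg hSN fun j _ _ => sq_nonneg _)) hσ.le
  have hcone (h : B ≤ 2 * σ * U) : φ * U ≤ √T := by
    refine hRE N hSN hNcard ?_ horder
    calc ∑ j ∈ Nᶜ, |δ j| ≤ B :=
          sum_le_sum_of_subset_of_nonneg (compl_subset_compl.2 hSN) fun j _ _ => abs_nonneg _
      _ ≤ 2 * σ * U := h
      _ ≤ 2 * √(N.card : ℝ) * U := by
        gcongr
        exact Real.sqrt_le_sqrt (mod_cast card_le_card hSN)
  have key := add_le_of_basic_inequality hT hR hlam (Real.sqrt_nonneg _) hφ hbasic hAU hcone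
  calc √(∑ j, δ j ^ 2)
      ≤ U + B / σ := sqrt_sum_sq_le_of_card_mul_sum_sq_le (mod_cast hS.card_pos)
          (sum_nonneg fun j _ => abs_nonneg _) htail
    _ = (σ * U + B) / σ := by field_simp
    _ ≤ (3 * R / lam + lam * σ ^ 2 / φ ^ 2) / σ := div_le_div_of_nonneg_right key hσ.le
    _ = 3 * R / (lam * σ) + lam * σ / φ ^ 2 := by field_simp

end RestrictedEigenvalue

theorem initial_lasso_estimation_general
    (n p : ℕ)
    (X : Matrix (Fin n) (Fin p) ℝ) (f0 : Fin n → ℝ)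
    (lamInit : ℝ) (hlamInit : 0 < lamInit)
    (βinit : Fin p → ℝ)
    (hβinit : ∀ β : Fin p → ℝ,
      (∑ i, (X.mulVec βinit i - f0 i) ^ 2) / n + lamInit * ∑ j, |βinit j|
        ≤ (∑ i, (X.mulVec β i - f0 i) ^ 2) / n + lamInit * ∑ j, |β j|)
    (S0 : Finset (Fin p)) (hS0 : S0.Nonempty)
    (b0 : Fin p → ℝ)
    (hb0supp : ∀ j ∉ S0, b0 j = 0)
    (φ : ℝ) (hφ : 0 < φ)
    (hRE : ∀ γ : Fin p → ℝ,
      (∑ j ∈ S0ᶜ, |γ j|) ≤ 2 * Real.sqrt (S0.card) * Real.sqrt (∑ j ∈ S0, (γ j) ^ 2) →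
      φ * Real.sqrt (∑ j ∈ S0, (γ j) ^ 2) ≤ Real.sqrt ((∑ i, (X.mulVec γ i) ^ 2) / n))
    (φ' : ℝ) (hφ' : 0 < φ')
    (hRE' : ∀ N : Finset (Fin p), S0 ⊆ N → N.card ≤ 2 * S0.card →
      ∀ γ : Fin p → ℝ,
        (∑ j ∈ Nᶜ, |γ j|) ≤ 2 * Real.sqrt (N.card) * Real.sqrt (∑ j ∈ N, (γ j) ^ 2) →
        (∀ j ∉ N, ∀ k ∈ N \ S0, |γ j| ≤ |γ k|) →
        φ' * Real.sqrt (∑ j ∈ N, (γ j) ^ 2) ≤ Real.sqrt ((∑ i, (X.mulVec γ i) ^ 2) / n)) :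
    (∑ j, |βinit j - b0 j|)
        ≤ 3 * ((∑ i, (X.mulVec b0 i - f0 i) ^ 2) / n) / lamInit
          + 3 * lamInit * S0.card / φ ^ 2
      ∧ Real.sqrt (∑ j, (βinit j - b0 j) ^ 2)
        ≤ 6 * ((∑ i, (X.mulVec b0 i - f0 i) ^ 2) / n) / (lamInit * Real.sqrt (S0.card))
          + 12 * lamInit * Real.sqrt (S0.card) / φ' ^ 2 := by
  have hbasic := lasso_basic_inequality (Nat.cast_nonneg n) hlamInit.le hβinit hb0supp
  have hT : 0 ≤ (∑ i, (X *ᵥ (βinit - b0)) i ^ 2) / n := by positivity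
  have hR : 0 ≤ (∑ i, (X.mulVec b0 i - f0 i) ^ 2) / n := by positivity
  constructor
  · refine (sum_abs_le_of_basic_inequality hT hR hlamInit hφ hbasic (hRE _)).trans ?_
    gcongr
    linarith
  · refine (sqrt_sum_sq_le_of_basic_inequality hS0 hT hR hlamInit hφ' hbasic
      fun N hSN hN => hRE' N hSN hN _).trans ?_
    gcongr <;> linarith

/-- ℓ1- and ℓ2-estimation bounds of Corollary `init.corollary` for the
noiseless initial Lasso. -/
theorem initial_lasso_estimation
    (n p : ℕ) (hn : 0 < n)
    (X : Matrix (Fin n) (Fin p) ℝ) (f0 : Fin n → ℝ)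
    (lamInit : ℝ) (hlamInit : 0 < lamInit)
    (βinit : Fin p → ℝ)
    (hβinit : ∀ β : Fin p → ℝ,
      (∑ i, (X.mulVec βinit i - f0 i) ^ 2) / n + lamInit * ∑ j, |βinit j|
        ≤ (∑ i, (X.mulVec β i - f0 i) ^ 2) / n + lamInit * ∑ j, |β j|)
    (S0 : Finset (Fin p)) (hS0 : S0.Nonempty)
    (b0 : Fin p → ℝ)
    (hb0supp : ∀ j ∉ S0, b0 j = 0)
    (hb0proj : ∀ j ∈ S0, ∑ i, (X.mulVec b0 i - f0 i) * X i j = 0)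
    (φ : ℝ) (hφ : 0 < φ)
    (hRE : ∀ γ : Fin p → ℝ,
      (∑ j ∈ S0ᶜ, |γ j|) ≤ 2 * Real.sqrt (S0.card) * Real.sqrt (∑ j ∈ S0, (γ j) ^ 2) →
      φ * Real.sqrt (∑ j ∈ S0, (γ j) ^ 2) ≤ Real.sqrt ((∑ i, (X.mulVec γ i) ^ 2) / n))
    (φ' : ℝ) (hφ' : 0 < φ')
    (hRE' : ∀ N : Finset (Fin p), S0 ⊆ N → N.card ≤ 2 * S0.card →
      ∀ γ : Fin p → ℝ,
        (∑ j ∈ Nᶜ, |γ j|) ≤ 2 * Real.sqrt (N.card) * Real.sqrt (∑ j ∈ N, (γ j) ^ 2) →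
        (∀ j ∉ N, ∀ k ∈ N \ S0, |γ j| ≤ |γ k|) →
        φ' * Real.sqrt (∑ j ∈ N, (γ j) ^ 2) ≤ Real.sqrt ((∑ i, (X.mulVec γ i) ^ 2) / n)) :
    (∑ j, |βinit j - b0 j|)
        ≤ 3 * ((∑ i, (X.mulVec b0 i - f0 i) ^ 2) / n) / lamInit
          + 3 * lamInit * S0.card / φ ^ 2
      ∧ Real.sqrt (∑ j, (βinit j - b0 j) ^ 2)
        ≤ 6 * ((∑ i, (X.mulVec b0 i - f0 i) ^ 2) / n) / (lamInit * Real.sqrt (S0.card))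
          + 12 * lamInit * Real.sqrt (S0.card) / φ' ^ 2 :=
  initial_lasso_estimation_general n p X f0 lamInit hlamInit βinit hβinit S0 hS0 b0 hb0supp φ hφ hRE
    φ' hφ' hRE'
end

section
/- Let β_init be any minimizer over ℝ^p of β ↦ ‖Xβ − f⁰‖_n² + λ_init‖β‖_1 (λ_init > 0), let S_init := {j : (β_init)_j ≠ 0}, and let S₀ ⊆ {1,…,p} be any index set. If Λ ≥ 0 satisfies ‖Xγ‖_n ≤ Λ‖γ‖_2 for every γ ∈ ℝ^p supported on S_init∖S₀, then |S_init∖S₀| ≤ 4Λ²·‖Xβ_init − f⁰‖_n²/λ_init². -/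
/-!
Write `r = Xβ - f` for the residual and `c` for the weight of the squared loss (`c = 1/n` for
`‖·‖_n²`). Perturbing a single nonzero coordinate `β_j` of a minimizer towards `0` shows the KKT
bound `λ ≤ 2c |(Xᵀr)_j|`. For `γ` equal to `Xᵀr` on `T = S_init \ S₀` and zero elsewhere,
`‖γ‖² = ⟨Xγ, r⟩ ≤ ‖Xγ‖ ‖r‖`, and the restricted bound `c ‖Xγ‖² ≤ Λ² ‖γ‖²` gives
`c ‖γ‖² ≤ Λ² ‖r‖²`. Summing the KKT bound over `T` gives `|T| λ² ≤ 4c² ‖γ‖² ≤ 4cΛ² ‖r‖²`.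
-/

open Finset Matrix Filter

/-- Moving `b` to `(1 - ε) b` gains `λ ε |b|` in the penalty at a cost of at most
`ε |a| |b| + O(ε²)`. -/
theorem le_abs_of_forall_nonneg_add_abs_sub {a q lam b : ℝ} (hb : b ≠ 0)
    (h : ∀ t, 0 ≤ a * t + q * t ^ 2 + lam * (|b + t| - |b|)) : lam ≤ |a| := by
  have hb' : 0 < |b| := abs_pos.mpr hb
  have step : ∀ ε ∈ Set.Ioo (0 : ℝ) 1, lam * |b| ≤ |a| * |b| + ε * (q * b ^ 2) := by
    rintro ε ⟨hε0, hε1⟩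
    have hshrink : |b + -(ε * b)| - |b| = -(ε * |b|) := by
      rw [show b + -(ε * b) = (1 - ε) * b by ring, abs_mul, abs_of_pos (by linarith)]
      ring
    have hstep := h (-(ε * b))
    rw [hshrink] at hstep
    have hscaled : ε * (lam * |b|) ≤ ε * (-(a * b) + ε * (q * b ^ 2)) := by nlinarith
    have hab : -(a * b) ≤ |a| * |b| := abs_mul a b ▸ neg_le_abs (a * b)
    linarith [le_of_mul_le_mul_left hscaled hε0]
  have hlim : Tendsto (fun ε : ℝ => |a| * |b| + ε * (q * b ^ 2)) (nhdsWithin 0 (Set.Ioi 0))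
      (nhds (|a| * |b|)) :=
    tendsto_nhdsWithin_of_tendsto_nhds <| by
      simpa using (Continuous.tendsto (by fun_prop) 0 :
        Tendsto (fun ε : ℝ => |a| * |b| + ε * (q * b ^ 2)) (nhds 0) _)
  exact le_of_mul_le_mul_right
    (ge_of_tendsto hlim (eventually_of_mem (Ioo_mem_nhdsGT one_pos) step)) hb'

variable {m ι : Type*} [Fintype m] [Fintype ι]

def lassoObjective (X : Matrix m ι ℝ) (f : m → ℝ) (c lam : ℝ) (β : ι → ℝ) : ℝ :=
  c * ∑ i, ((X *ᵥ β) i - f i) ^ 2 + lam * ∑ j, |β j|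

theorem lassoObjective_add_single [DecidableEq ι] (X : Matrix m ι ℝ) (f : m → ℝ) (c lam : ℝ)
    (β : ι → ℝ) (j : ι) (t : ℝ) :
    lassoObjective X f c lam (β + Pi.single j t) = lassoObjective X f c lam β
      + 2 * c * ((X *ᵥ β - f) ᵥ* X) j * t + (c * ∑ i, X i j ^ 2) * t ^ 2
      + lam * (|β j + t| - |β j|) := by
  have hfit : ∀ i, (X *ᵥ (β + Pi.single j t)) i - f i = (X *ᵥ β - f) i + X i j * t := by
    intro i
    simp only [mulVec_add, mulVec_single, op_smul_eq_smul, Pi.add_apply, Pi.smul_apply,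
      col_apply, smul_eq_mul, Pi.sub_apply]
    ring
  have hsq : ∑ i, ((X *ᵥ (β + Pi.single j t)) i - f i) ^ 2
      = ∑ i, ((X *ᵥ β) i - f i) ^ 2 + 2 * ((X *ᵥ β - f) ᵥ* X) j * t
        + (∑ i, X i j ^ 2) * t ^ 2 := by
    calc _ = ∑ i, (((X *ᵥ β) i - f i) ^ 2 + 2 * ((X *ᵥ β - f) i * X i j) * t
            + X i j ^ 2 * t ^ 2) := sum_congr rfl fun i _ => by rw [hfit i, Pi.sub_apply]; ring
      _ = _ := by simp only [sum_add_distrib, ← sum_mul, ← mul_sum, vecMul, dotProduct]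
  have habs : ∑ k, |(β + Pi.single j t : ι → ℝ) k| = ∑ k, |β k| + (|β j + t| - |β j|) := by
    rw [← sub_eq_iff_eq_add', ← sum_sub_distrib,
      sum_eq_single j (fun k _ hk => by simp [hk]) (by simp)]
    simp
  simp only [lassoObjective, hsq, habs]
  ring

theorem le_abs_vecMul_of_lasso_min [DecidableEq ι] {X : Matrix m ι ℝ} {f : m → ℝ} {c lam : ℝ}
    {β : ι → ℝ} (hmin : ∀ β', lassoObjective X f c lam β ≤ lassoObjective X f c lam β')
    {j : ι} (hj : β j ≠ 0) : lam ≤ |2 * c * ((X *ᵥ β - f) ᵥ* X) j| :=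
  le_abs_of_forall_nonneg_add_abs_sub (q := c * ∑ i, X i j ^ 2) hj fun t => by
    have := hmin (β + Pi.single j t)
    rw [lassoObjective_add_single] at this
    linarith

theorem mul_sum_sq_vecMul_le {X : Matrix m ι ℝ} {c Λ : ℝ} {T : Finset ι} (hc : 0 ≤ c)
    (hΛ : ∀ γ : ι → ℝ, (∀ j ∉ T, γ j = 0) →
      √(c * ∑ i, (X *ᵥ γ) i ^ 2) ≤ Λ * √(∑ j, γ j ^ 2)) (r : m → ℝ) :
    c * ∑ j ∈ T, (r ᵥ* X) j ^ 2 ≤ Λ ^ 2 * ∑ i, r i ^ 2 := by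
  classical
  set γ : ι → ℝ := fun j => if j ∈ T then (r ᵥ* X) j else 0
  set A := ∑ j ∈ T, (r ᵥ* X) j ^ 2
  have hA : 0 ≤ A := sum_nonneg fun j _ => sq_nonneg _
  have hγ_sq : ∑ j, γ j ^ 2 = A := by
    simp [γ, A, ite_pow, sum_ite_mem]
  have hγ_dual : ∑ i, (X *ᵥ γ) i * r i = A := by
    have := dotProduct_mulVec r X γ
    simp only [dotProduct] at this
    simp [mul_comm, this, γ, A, sq, sum_ite_mem]
  have hXγ : c * ∑ i, (X *ᵥ γ) i ^ 2 ≤ Λ ^ 2 * A := by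
    have h := hΛ γ fun j hj => if_neg hj
    rw [hγ_sq] at h
    have h2 := pow_le_pow_left₀ (Real.sqrt_nonneg _) h 2
    rwa [Real.sq_sqrt (by positivity), mul_pow, Real.sq_sqrt hA] at h2
  have hCS : A ^ 2 ≤ (∑ i, (X *ᵥ γ) i ^ 2) * ∑ i, r i ^ 2 :=
    hγ_dual ▸ sum_mul_sq_le_sq_mul_sq _ _ _
  rcases hA.eq_or_lt with hA0 | hApos
  · rw [← hA0, mul_zero]; positivity
  · refine le_of_mul_le_mul_right ?_ hApos
    calc c * A * A = c * A ^ 2 := by ring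
      _ ≤ c * ((∑ i, (X *ᵥ γ) i ^ 2) * ∑ i, r i ^ 2) := mul_le_mul_of_nonneg_left hCS hc
      _ = (c * ∑ i, (X *ᵥ γ) i ^ 2) * ∑ i, r i ^ 2 := by ring
      _ ≤ (Λ ^ 2 * A) * ∑ i, r i ^ 2 :=
        mul_le_mul_of_nonneg_right hXγ (sum_nonneg fun i _ => sq_nonneg _)
      _ = Λ ^ 2 * (∑ i, r i ^ 2) * A := by ring

theorem card_le_of_lasso_min [DecidableEq ι] {X : Matrix m ι ℝ} {f : m → ℝ} {c lam Λ : ℝ}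
    {β : ι → ℝ} {T : Finset ι} (hc : 0 ≤ c) (hlam : 0 < lam)
    (hmin : ∀ β', lassoObjective X f c lam β ≤ lassoObjective X f c lam β')
    (hT : ∀ j ∈ T, β j ≠ 0)
    (hΛ : ∀ γ : ι → ℝ, (∀ j ∉ T, γ j = 0) →
      √(c * ∑ i, (X *ᵥ γ) i ^ 2) ≤ Λ * √(∑ j, γ j ^ 2)) :
    (#T : ℝ) ≤ 4 * Λ ^ 2 * (c * ∑ i, ((X *ᵥ β) i - f i) ^ 2) / lam ^ 2 := by
  set d := (X *ᵥ β - f) ᵥ* X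
  have hkkt : ∀ j ∈ T, lam ^ 2 ≤ 4 * c ^ 2 * d j ^ 2 := fun j hj =>
    calc lam ^ 2 ≤ |2 * c * d j| ^ 2 :=
          pow_le_pow_left₀ hlam.le (le_abs_vecMul_of_lasso_min hmin (hT j hj)) 2
      _ = 4 * c ^ 2 * d j ^ 2 := by rw [sq_abs]; ring
  rw [le_div_iff₀ (by positivity)]
  calc #T * lam ^ 2 = ∑ j ∈ T, lam ^ 2 := by simp
    _ ≤ ∑ j ∈ T, 4 * c ^ 2 * d j ^ 2 := sum_le_sum hkkt
    _ = 4 * c * (c * ∑ j ∈ T, d j ^ 2) := by rw [← mul_sum]; ring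
    _ ≤ 4 * c * (Λ ^ 2 * ∑ i, (X *ᵥ β - f) i ^ 2) :=
      mul_le_mul_of_nonneg_left (mul_sum_sq_vecMul_le hc hΛ _) (by positivity)
    _ = 4 * Λ ^ 2 * (c * ∑ i, ((X *ᵥ β) i - f i) ^ 2) := by simp only [Pi.sub_apply]; ring

theorem initial_lasso_false_positives_general
    (n p : ℕ)
    (X : Matrix (Fin n) (Fin p) ℝ) (f0 : Fin n → ℝ)
    (lamInit : ℝ) (hlamInit : 0 < lamInit)
    (βinit : Fin p → ℝ)
    (hβinit : ∀ β : Fin p → ℝ,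
      (∑ i, (X.mulVec βinit i - f0 i) ^ 2) / n + lamInit * ∑ j, |βinit j|
        ≤ (∑ i, (X.mulVec β i - f0 i) ^ 2) / n + lamInit * ∑ j, |β j|)
    (Sinit : Finset (Fin p)) (hSinit : ∀ j, j ∈ Sinit ↔ βinit j ≠ 0)
    (S0 : Finset (Fin p))
    (Λ : ℝ)
    (hΛ : ∀ γ : Fin p → ℝ, (∀ j ∉ Sinit \ S0, γ j = 0) →
      Real.sqrt ((∑ i, (X.mulVec γ i) ^ 2) / n) ≤ Λ * Real.sqrt (∑ j, (γ j) ^ 2)) :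
    ((Sinit \ S0).card : ℝ)
      ≤ 4 * Λ ^ 2 * ((∑ i, (X.mulVec βinit i - f0 i) ^ 2) / n) / lamInit ^ 2 := by
  simp only [div_eq_inv_mul (b := (n : ℝ))] at hβinit hΛ ⊢
  exact card_le_of_lasso_min (by positivity) hlamInit hβinit
    (fun j hj => (hSinit j).1 (mem_sdiff.1 hj).1) hΛ

/-- False-positives bound of Corollary `init.corollary` for the noiseless initial Lasso. -/
theorem initial_lasso_false_positives
    (n p : ℕ) (hn : 0 < n)
    (X : Matrix (Fin n) (Fin p) ℝ) (f0 : Fin n → ℝ)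
    (lamInit : ℝ) (hlamInit : 0 < lamInit)
    (βinit : Fin p → ℝ)
    (hβinit : ∀ β : Fin p → ℝ,
      (∑ i, (X.mulVec βinit i - f0 i) ^ 2) / n + lamInit * ∑ j, |βinit j|
        ≤ (∑ i, (X.mulVec β i - f0 i) ^ 2) / n + lamInit * ∑ j, |β j|)
    (Sinit : Finset (Fin p)) (hSinit : ∀ j, j ∈ Sinit ↔ βinit j ≠ 0)
    (S0 : Finset (Fin p))
    (Λ : ℝ) (hΛ0 : 0 ≤ Λ)
    (hΛ : ∀ γ : Fin p → ℝ, (∀ j ∉ Sinit \ S0, γ j = 0) →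
      Real.sqrt ((∑ i, (X.mulVec γ i) ^ 2) / n) ≤ Λ * Real.sqrt (∑ j, (γ j) ^ 2)) :
    ((Sinit \ S0).card : ℝ)
      ≤ 4 * Λ ^ 2 * ((∑ i, (X.mulVec βinit i - f0 i) ^ 2) / n) / lamInit ^ 2 :=
  initial_lasso_false_positives_general n p X f0 lamInit hlamInit βinit hβinit Sinit hSinit S0 Λ hΛ
end

section
/- Let Y = f⁰ + ε with ε ∈ ℝ^n satisfying max_{1≤j≤p} 4|ε·ψ_j|/n ≤ λ_init (λ_init > 0). Let β̂_init be any minimizer over ℝ^p of β ↦ ‖Y − Xβ‖_n² + λ_init‖β‖_1. Let S₀ ⊆ {1,…,p} with s₀ := |S₀| ≥ 1, let b⁰ ∈ ℝ^p be supported on S₀, and set δ̂₂ := ‖β̂_init − b⁰‖_2. Let δ ≥ δ̂₂/√s₀ and Ŝ^δ := {j : |(β̂_init)_j| > δ}. Let f̂ and f be the orthogonal projections of Y and of f⁰, respectively, onto span{ψ_j : j ∈ Ŝ^δ}. If φ > 0 satisfies ‖Xγ‖_n ≥ φ‖γ‖_2 for every γ ∈ ℝ^p supported on an index set 𝒩 with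 S₀ ⊆ 𝒩 and |𝒩| ≤ 2s₀, then ‖f̂ − f‖_n² ≤ λ_init²·s₀/(2φ²). -/
open Finset

private lemma aux_sq_bound (B K s : ℝ) (hs : 0 ≤ s) (hK : 0 ≤ K)
    (hsq : s ^ 2 = B) (h : s ^ 2 ≤ K * s) : B ≤ K ^ 2 := by
  nlinarith [sq_nonneg (s - K)]

private lemma aux_ring_eq (a m r s q : ℝ) (hq : q ≠ 0) :
    a * m / 4 * (r * (s / q)) = a * r / (4 * q) * s * m := by
  field_simp

private lemma aux_cmp (l t f : ℝ) (hl : 0 ≤ l) (ht : 0 ≤ t) (hf : 0 ≤ f) :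
    l * (2 * t) * (2 * f) ≤ l * t * (16 * f) := by
  nlinarith [mul_nonneg (mul_nonneg hl ht) hf]

/-- Lemma `leastsquares`: on the event 𝒯, the refitted least-squares estimator on the
thresholded set is close to the corresponding noiseless projection. -/
theorem refitted_close_to_projection
    (n p : ℕ) (hn : 0 < n)
    (X : Matrix (Fin n) (Fin p) ℝ) (f0 : Fin n → ℝ)
    (ε : Fin n → ℝ) (Y : Fin n → ℝ) (hY : ∀ i, Y i = f0 i + ε i)
    (lamInit : ℝ) (hlamInit : 0 < lamInit)
    (hnoise : ∀ j, 4 * |∑ i, ε i * X i j| / n ≤ lamInit)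
    (βinit : Fin p → ℝ)
    (hβinit : ∀ β : Fin p → ℝ,
      (∑ i, (Y i - X.mulVec βinit i) ^ 2) / n + lamInit * ∑ j, |βinit j|
        ≤ (∑ i, (Y i - X.mulVec β i) ^ 2) / n + lamInit * ∑ j, |β j|)
    (S0 : Finset (Fin p)) (hS0 : 1 ≤ S0.card)
    (b0 : Fin p → ℝ) (hb0supp : ∀ j ∉ S0, b0 j = 0)
    (δ2hat : ℝ) (hδ2hat : δ2hat = Real.sqrt (∑ j, (βinit j - b0 j) ^ 2))
    (δ : ℝ) (hδ : δ2hat / Real.sqrt (S0.card) ≤ δ)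
    (Sδ : Finset (Fin p)) (hSδ : ∀ j, j ∈ Sδ ↔ δ < |βinit j|)
    -- `X.mulVec chat` is the orthogonal projection of `Y` onto `span {ψ_j : j ∈ Sδ}`
    (chat : Fin p → ℝ)
    (hchatsupp : ∀ j ∉ Sδ, chat j = 0)
    (hchatproj : ∀ j ∈ Sδ, ∑ i, (X.mulVec chat i - Y i) * X i j = 0)
    -- `X.mulVec c` is the orthogonal projection of `f0` onto `span {ψ_j : j ∈ Sδ}`
    (c : Fin p → ℝ)
    (hcsupp : ∀ j ∉ Sδ, c j = 0)
    (hcproj : ∀ j ∈ Sδ, ∑ i, (X.mulVec c i - f0 i) * X i j = 0)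
    (φ : ℝ) (hφ : 0 < φ)
    (hsparse : ∀ N : Finset (Fin p), S0 ⊆ N → N.card ≤ 2 * S0.card →
      ∀ γ : Fin p → ℝ, (∀ j ∉ N, γ j = 0) →
      φ * Real.sqrt (∑ j, (γ j) ^ 2) ≤ Real.sqrt ((∑ i, (X.mulVec γ i) ^ 2) / n)) :
    (∑ i, (X.mulVec chat i - X.mulVec c i) ^ 2) / n
      ≤ lamInit ^ 2 * S0.card / (2 * φ ^ 2) := by
  set Δ : Fin p → ℝ := fun j => chat j - c j with hΔdef
  have hΔsupp : ∀ j ∉ Sδ, Δ j = 0 := by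
    intro j hj; simp [hΔdef, hchatsupp j hj, hcsupp j hj]
  have hmv : ∀ i, X.mulVec chat i - X.mulVec c i = X.mulVec Δ i := by
    intro i
    simp [hΔdef, Matrix.mulVec, dotProduct, mul_sub, Finset.sum_sub_distrib]
  have hnR : (0:ℝ) < n := by exact_mod_cast hn
  -- Step 1: for j ∈ Sδ, (XΔ)·ψ_j = ε·ψ_j
  have key1 : ∀ j ∈ Sδ, ∑ i, X.mulVec Δ i * X i j = ∑ i, ε i * X i j := by
    intro j hj
    have h1 := hchatproj j hj
    have h2 := hcproj j hj
    have hpt : ∀ i, X.mulVec Δ i * X i j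
        = (X.mulVec chat i - Y i) * X i j - (X.mulVec c i - f0 i) * X i j + ε i * X i j := by
      intro i; rw [← hmv i, hY i]; ring
    calc ∑ i, X.mulVec Δ i * X i j
        = ∑ i, ((X.mulVec chat i - Y i) * X i j - (X.mulVec c i - f0 i) * X i j
            + ε i * X i j) := Finset.sum_congr rfl fun i _ => hpt i
      _ = ∑ i, ε i * X i j := by
          rw [Finset.sum_add_distrib, Finset.sum_sub_distrib, h1, h2]; ring
  -- Step 2: ‖XΔ‖² = ∑_{j∈Sδ} Δ_j (ε·ψ_j)
  have key2 : ∑ i, (X.mulVec Δ i)^2 = ∑ j ∈ Sδ, Δ j * ∑ i, ε i * X i j := by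
    have expand : ∀ i, (X.mulVec Δ i)^2 = ∑ j, X.mulVec Δ i * X i j * Δ j := by
      intro i
      have h : X.mulVec Δ i = ∑ j, X i j * Δ j := rfl
      calc (X.mulVec Δ i)^2 = X.mulVec Δ i * ∑ j, X i j * Δ j := by rw [pow_two, ← h]
        _ = ∑ j, X.mulVec Δ i * X i j * Δ j := by
            rw [Finset.mul_sum]
            exact Finset.sum_congr rfl fun j _ => by ring
    have e1 : ∑ i, (X.mulVec Δ i)^2 = ∑ j, Δ j * ∑ i, X.mulVec Δ i * X i j := by
      rw [Finset.sum_congr rfl (fun i _ => expand i), Finset.sum_comm]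
      exact Finset.sum_congr rfl fun j _ => by
        rw [Finset.mul_sum]
        exact Finset.sum_congr rfl fun i _ => by ring
    rw [e1]
    rw [← Finset.sum_subset (Finset.subset_univ Sδ)
      (fun j _ hj => by rw [hΔsupp j hj, zero_mul])]
    exact Finset.sum_congr rfl fun j hj => by rw [key1 j hj]
  -- Step 3: ℓ¹ bound via the noise event
  have hbound : ∑ i, (X.mulVec Δ i)^2 ≤ lamInit * n / 4 * ∑ j ∈ Sδ, |Δ j| := by
    rw [key2, Finset.mul_sum]
    apply Finset.sum_le_sum
    intro j _
    have h1 : |∑ i, ε i * X i j| ≤ lamInit * n / 4 := by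
      have h := hnoise j
      rw [div_le_iff₀ hnR] at h
      linarith
    calc Δ j * ∑ i, ε i * X i j ≤ |Δ j * ∑ i, ε i * X i j| := le_abs_self _
      _ = |Δ j| * |∑ i, ε i * X i j| := abs_mul _ _
      _ ≤ |Δ j| * (lamInit * n / 4) :=
          mul_le_mul_of_nonneg_left h1 (abs_nonneg _)
      _ = lamInit * n / 4 * |Δ j| := mul_comm _ _
  -- cardinality of Sδ \ S0
  have hs0pos : (0:ℝ) < S0.card := by exact_mod_cast hS0
  have hδ2nonneg : 0 ≤ δ2hat := hδ2hat ▸ Real.sqrt_nonneg _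
  have hδnonneg : 0 ≤ δ :=
    le_trans (div_nonneg hδ2nonneg (Real.sqrt_nonneg _)) hδ
  have hδ2sq : δ2hat^2 = ∑ j, (βinit j - b0 j)^2 := by
    rw [hδ2hat, Real.sq_sqrt (Finset.sum_nonneg fun j _ => sq_nonneg _)]
  have hδ2le : δ2hat ≤ δ * Real.sqrt S0.card := by
    rw [div_le_iff₀ (Real.sqrt_pos.mpr hs0pos)] at hδ; exact hδ
  have hδ2sqle : δ2hat^2 ≤ δ^2 * S0.card := by
    have h := mul_self_le_mul_self hδ2nonneg hδ2le
    have h2 : (Real.sqrt S0.card) * (Real.sqrt S0.card) = (S0.card:ℝ) :=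
      Real.mul_self_sqrt (le_of_lt hs0pos)
    nlinarith [h2]
  have hTcard : ((Sδ \ S0).card : ℝ) ≤ S0.card := by
    by_cases hδ0 : δ = 0
    · have hδ2z : δ2hat = 0 :=
        le_antisymm (by rw [hδ0] at hδ2le; simpa using hδ2le) hδ2nonneg
      have hsum0 : ∑ j, (βinit j - b0 j)^2 = 0 := by
        rw [← hδ2sq, hδ2z]; norm_num
      have hβeq : ∀ j, βinit j = b0 j := by
        intro j
        have h := (Finset.sum_eq_zero_iff_of_nonneg (fun j _ => sq_nonneg _)).mp hsum0 j
          (Finset.mem_univ j)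
        have h' := sq_eq_zero_iff.mp h
        linarith [h']
      have hempty : Sδ \ S0 = ∅ := by
        apply Finset.eq_empty_of_forall_notMem
        intro j hj
        obtain ⟨hjS, hjn⟩ := Finset.mem_sdiff.mp hj
        have h1 := (hSδ j).mp hjS
        rw [hβeq j, hb0supp j hjn] at h1
        simp [hδ0] at h1
      rw [hempty]; simpa using le_of_lt hs0pos
    · have hδpos : 0 < δ := lt_of_le_of_ne hδnonneg (Ne.symm hδ0)
      have hlb : ∀ j ∈ Sδ \ S0, δ^2 ≤ (βinit j - b0 j)^2 := by
        intro j hj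
        obtain ⟨hjS, hjn⟩ := Finset.mem_sdiff.mp hj
        have h1 := (hSδ j).mp hjS
        rw [hb0supp j hjn, sub_zero]
        have h2 := pow_le_pow_left₀ hδnonneg (le_of_lt h1) 2
        rwa [sq_abs] at h2
      have hsumlb : ((Sδ \ S0).card : ℝ) * δ^2 ≤ ∑ j, (βinit j - b0 j)^2 := by
        calc ((Sδ \ S0).card : ℝ) * δ^2 = ∑ _j ∈ Sδ \ S0, δ^2 := by
              rw [Finset.sum_const, nsmul_eq_mul]
          _ ≤ ∑ j ∈ Sδ \ S0, (βinit j - b0 j)^2 := Finset.sum_le_sum hlb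
          _ ≤ ∑ j, (βinit j - b0 j)^2 :=
              Finset.sum_le_sum_of_subset_of_nonneg (Finset.subset_univ _)
                (fun j _ _ => sq_nonneg _)
      have hδ2 : 0 < δ^2 := by positivity
      nlinarith [hsumlb, hδ2sqle, hδ2sq]
  have hNcard : (S0 ∪ Sδ).card ≤ 2 * S0.card := by
    have he : S0 ∪ Sδ = S0 ∪ (Sδ \ S0) := (Finset.union_sdiff_self_eq_union).symm
    rw [he, Finset.card_union_of_disjoint Finset.disjoint_sdiff]
    have h : (Sδ \ S0).card ≤ S0.card := by exact_mod_cast hTcard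
    omega
  -- sparse eigenvalue applied to Δ
  have hsp := hsparse (S0 ∪ Sδ) Finset.subset_union_left hNcard Δ
    (fun j hj => hΔsupp j (fun hjS => hj (Finset.mem_union_right _ hjS)))
  set A : ℝ := ∑ i, (X.mulVec Δ i)^2 with hAdef
  set t : ℝ := Real.sqrt (∑ j, (Δ j)^2) with htdef
  have hAnonneg : 0 ≤ A := Finset.sum_nonneg fun i _ => sq_nonneg _
  have htnonneg : 0 ≤ t := Real.sqrt_nonneg _
  have hΔsq : ∑ j ∈ Sδ, (Δ j)^2 = ∑ j, (Δ j)^2 :=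
    Finset.sum_subset (Finset.subset_univ Sδ)
      (fun j _ hj => by rw [hΔsupp j hj]; norm_num)
  -- Cauchy–Schwarz
  have hCS : ∑ j ∈ Sδ, |Δ j| ≤ Real.sqrt (Sδ.card) * t := by
    have h1 : (∑ j ∈ Sδ, |Δ j|)^2 ≤ (Sδ.card : ℝ) * ∑ j ∈ Sδ, |Δ j|^2 :=
      sq_sum_le_card_mul_sum_sq
    have h2 : ∑ j ∈ Sδ, |Δ j|^2 = ∑ j, (Δ j)^2 := by
      rw [← hΔsq]; exact Finset.sum_congr rfl fun j _ => sq_abs _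
    rw [h2] at h1
    calc ∑ j ∈ Sδ, |Δ j|
        = Real.sqrt ((∑ j ∈ Sδ, |Δ j|)^2) :=
          (Real.sqrt_sq (Finset.sum_nonneg fun j _ => abs_nonneg _)).symm
      _ ≤ Real.sqrt ((Sδ.card : ℝ) * ∑ j, (Δ j)^2) := Real.sqrt_le_sqrt h1
      _ = Real.sqrt (Sδ.card) * t := by
          rw [htdef, Real.sqrt_mul (Nat.cast_nonneg _)]
  set sB : ℝ := Real.sqrt (A / n) with hsBdef
  have hsBnonneg : 0 ≤ sB := Real.sqrt_nonneg _
  have hsBsq : sB^2 = A / n := Real.sq_sqrt (by positivity)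
  have hcard2 : Real.sqrt (Sδ.card) ≤ Real.sqrt (2 * S0.card) := by
    apply Real.sqrt_le_sqrt
    have h := le_trans (Finset.card_le_card
      (Finset.subset_union_right : Sδ ⊆ S0 ∪ Sδ)) hNcard
    exact_mod_cast h
  have ht_le : t ≤ sB / φ := by
    rw [le_div_iff₀ hφ]
    calc t * φ = φ * t := mul_comm _ _
      _ ≤ sB := hsp
  have hA1 : A ≤ lamInit * n / 4 * (Real.sqrt (2 * S0.card) * t) := by
    refine le_trans hbound ?_
    apply mul_le_mul_of_nonneg_left _ (by positivity)
    exact le_trans hCS (mul_le_mul_of_nonneg_right hcard2 htnonneg)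
  set K : ℝ := lamInit * Real.sqrt (2 * S0.card) / (4 * φ) with hKdef
  have hKnonneg : 0 ≤ K := by positivity
  have hsB_ineq : sB^2 ≤ K * sB := by
    have hA2 : A ≤ lamInit * n / 4 * (Real.sqrt (2 * S0.card) * (sB / φ)) :=
      le_trans hA1 (by
        apply mul_le_mul_of_nonneg_left _ (by positivity)
        exact mul_le_mul_of_nonneg_left ht_le (Real.sqrt_nonneg _))
    have h : A / n ≤ K * sB := by
      rw [div_le_iff₀ hnR]
      calc A ≤ lamInit * n / 4 * (Real.sqrt (2 * S0.card) * (sB / φ)) := hA2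
        _ = K * sB * n := by rw [hKdef]; exact aux_ring_eq _ _ _ _ _ (ne_of_gt hφ)
    rw [hsBsq]; exact h
  have hfinal : A / n ≤ K^2 :=
    aux_sq_bound (A / n) K sB hsBnonneg hKnonneg hsBsq hsB_ineq
  have hK2 : K^2 = lamInit^2 * (2 * (S0.card:ℝ)) / (16 * φ^2) := by
    rw [hKdef, div_pow, mul_pow, Real.sq_sqrt (by positivity)]
    ring
  have hgoal_eq : ∑ i, (X.mulVec chat i - X.mulVec c i)^2 = A := by
    rw [hAdef]; exact Finset.sum_congr rfl fun i _ => by rw [hmv i]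
  rw [hgoal_eq]
  refine le_trans hfinal ?_
  rw [hK2, div_le_div_iff₀ (by positivity) (by positivity)]
  exact aux_cmp (lamInit ^ 2) (S0.card : ℝ) (φ ^ 2) (sq_nonneg _) (le_of_lt hs0pos)
    (sq_nonneg _)
end

section
/- Suppose f⁰ = Xβ_true for some β_true ∈ ℝ^p, and let S := {j : (β_true)_j ≠ 0}. Let Σ̂ := XᵀX/n, let Σ̂₁₁(S) be its S×S block and Σ̂₂₁(S) its S^c×S block, and assume Σ̂₁₁(S) is invertible. Let w_j > 0 for all j, and let W_S and W_{S^c} be the diagonal matrices of the weights indexed by S and S^c. Assume the weighted irrepresentable condition holds for S: for every τ ∈ ℝ^S with ‖τ‖_∞ ≤ 1, ‖W_{S^c}^{−1}·Σ̂₂₁(S)·Σ̂₁₁(S)^{−1}·W_S·τ‖_∞ < 1. Then every weighted Lasso solution β_weight satisfies (β_weight)_j = 0 for all j ∉ S. -/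
open Finset

lemma aux_le (a b c : ℝ) (h : ∀ ε : ℝ, 0 < ε → a ≤ b + ε * c) : a ≤ b := by
  by_contra hab
  push_neg at hab
  rcases le_or_gt c 0 with hc | hc
  · have := h 1 one_pos; nlinarith
  · have h1 := h ((a - b) / (2 * c)) (div_pos (by linarith) (by linarith))
    have h2 : (a - b) / (2 * c) * c = (a - b) / 2 := by field_simp
    rw [h2] at h1; linarith

lemma aux_nonpos (a c : ℝ) (h : ∀ s : ℝ, 0 < s → s < 1 → a ≤ s * c) : a ≤ 0 := by
  rcases le_or_gt c 0 with hc | hc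
  · have := h (1/2) (by norm_num) (by norm_num); nlinarith
  · by_contra ha
    push_neg at ha
    set s := min (1/2 : ℝ) (a / (2 * c)) with hs
    have hs0 : 0 < s := lt_min (by norm_num) (div_pos ha (by linarith))
    have hs1 : s < 1 := lt_of_le_of_lt (min_le_left _ _) (by norm_num)
    have h1 := h s hs0 hs1
    have h2 : s * c ≤ (a / (2 * c)) * c := by
      apply mul_le_mul_of_nonneg_right (min_le_right _ _) hc.le
    have h3 : (a / (2 * c)) * c = a / 2 := by field_simp
    rw [h3] at h2; linarith

lemma lasso_kkt (n p : ℕ) (hn : 0 < n)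
    (X : Matrix (Fin n) (Fin p) ℝ) (f0 : Fin n → ℝ)
    (w : Fin p → ℝ) (hw : ∀ j, 0 < w j)
    (lam : ℝ) (hlam : 0 < lam)
    (βw : Fin p → ℝ)
    (hβw : ∀ β : Fin p → ℝ,
      (∑ i, (X.mulVec βw i - f0 i) ^ 2) / n + lam * ∑ j, w j * |βw j|
        ≤ (∑ i, (X.mulVec β i - f0 i) ^ 2) / n + lam * ∑ j, w j * |β j|)
    (j : Fin p) :
    |2 * (∑ i, X i j * (X.mulVec βw i - f0 i)) / n| ≤ lam * w j ∧
      (2 * (∑ i, X i j * (X.mulVec βw i - f0 i)) / n) * βw j = -(lam * w j * |βw j|) := by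
  have hnR : (0:ℝ) < (n:ℝ) := by exact_mod_cast hn
  have hnne : (n:ℝ) ≠ 0 := ne_of_gt hnR
  set Q : ℝ := ∑ i, (X.mulVec βw i - f0 i) ^ 2 with hQ
  set A : ℝ := ∑ i, X i j * (X.mulVec βw i - f0 i) with hA
  set C : ℝ := ∑ i, (X i j)^2 with hC
  have hC0 : 0 ≤ C := Finset.sum_nonneg fun i _ => sq_nonneg _
  have master : ∀ t : ℝ,
      0 ≤ t * (2 * A / n) + t^2 * (C / n) + lam * w j * (|βw j + t| - |βw j|) := by
    intro t
    have h1 := hβw (Function.update βw j (βw j + t))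
    have hmv : ∀ i, X.mulVec (Function.update βw j (βw j + t)) i
        = X.mulVec βw i + t * X i j := by
      intro i
      simp only [Matrix.mulVec, dotProduct]
      have heach : ∀ k, X i k * Function.update βw j (βw j + t) k
          = X i k * βw k + (if k = j then X i k * t else 0) := by
        intro k
        by_cases hk : k = j
        · subst hk; simp [Function.update_self]; ring
        · simp [Function.update_of_ne hk, if_neg hk]
      rw [Finset.sum_congr rfl (fun k _ => heach k), Finset.sum_add_distrib,
        Finset.sum_ite_eq' Finset.univ j (fun k => X i k * t)]
      simp [mul_comm]
    have hpen : ∑ k, w k * |Function.update βw j (βw j + t) k|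
        = (∑ k, w k * |βw k|) + (w j * |βw j + t| - w j * |βw j|) := by
      have heach : ∀ k, w k * |Function.update βw j (βw j + t) k|
          = w k * |βw k| + (if k = j then w j * |βw j + t| - w j * |βw j| else 0) := by
        intro k
        by_cases hk : k = j
        · subst hk; simp [Function.update_self]
        · simp [Function.update_of_ne hk, if_neg hk]
      rw [Finset.sum_congr rfl (fun k _ => heach k), Finset.sum_add_distrib,
        Finset.sum_ite_eq' Finset.univ j _]
      simp
    have hquad : ∑ i, (X.mulVec (Function.update βw j (βw j + t)) i - f0 i) ^ 2
        = Q + (2 * t * A + t^2 * C) := by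
      have heach : ∀ i, (X.mulVec (Function.update βw j (βw j + t)) i - f0 i) ^ 2
          = (X.mulVec βw i - f0 i)^2
            + (2 * t * (X i j * (X.mulVec βw i - f0 i)) + t^2 * (X i j)^2) := by
        intro i; rw [hmv i]; ring
      rw [Finset.sum_congr rfl (fun i _ => heach i), Finset.sum_add_distrib,
        Finset.sum_add_distrib, ← Finset.mul_sum, ← Finset.mul_sum]
    rw [hquad, hpen] at h1
    have hsplit : (Q + (2 * t * A + t^2 * C)) / n
        = Q / n + (t * (2 * A / n) + t^2 * (C / n)) := by field_simp
    rw [hsplit] at h1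
    nlinarith [h1]
  have kkt1 : |2 * A / n| ≤ lam * w j := by
    rw [abs_le]
    constructor
    · have key : ∀ ε : ℝ, 0 < ε → -(2 * A / n) ≤ lam * w j + ε * (C / n) := by
        intro ε hε
        have hm := master ε
        have habs : |βw j + ε| - |βw j| ≤ ε := by
          have := abs_sub_abs_le_abs_sub (βw j + ε) (βw j)
          have h2 : |βw j + ε - βw j| = ε := by
            rw [show βw j + ε - βw j = ε by ring, abs_of_pos hε]
          linarith
        have h5 : lam * w j * (|βw j + ε| - |βw j|) ≤ lam * w j * ε :=
          mul_le_mul_of_nonneg_left habs (mul_nonneg hlam.le (hw j).le)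
        have h6 : 0 ≤ ε * (2 * A / n) + ε^2 * (C / n) + lam * w j * ε := by nlinarith
        have h7 : ε * (-(2 * A / n)) ≤ ε * (lam * w j + ε * (C / n)) := by nlinarith
        exact le_of_mul_le_mul_left h7 hε
      linarith [aux_le _ _ _ key]
    · have key : ∀ ε : ℝ, 0 < ε → 2 * A / n ≤ lam * w j + ε * (C / n) := by
        intro ε hε
        have hm := master (-ε)
        have habs : |βw j + -ε| - |βw j| ≤ ε := by
          have := abs_sub_abs_le_abs_sub (βw j + -ε) (βw j)
          have h2 : |βw j + -ε - βw j| = ε := by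
            rw [show βw j + -ε - βw j = -ε by ring, abs_neg, abs_of_pos hε]
          linarith
        have h5 : lam * w j * (|βw j + -ε| - |βw j|) ≤ lam * w j * ε :=
          mul_le_mul_of_nonneg_left habs (mul_nonneg hlam.le (hw j).le)
        have h6 : 0 ≤ -ε * (2 * A / n) + ε^2 * (C / n) + lam * w j * ε := by nlinarith
        have h7 : ε * (2 * A / n) ≤ ε * (lam * w j + ε * (C / n)) := by nlinarith
        exact le_of_mul_le_mul_left h7 hε
      exact aux_le _ _ _ key
  refine ⟨kkt1, ?_⟩
  by_cases hz : βw j = 0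
  · simp [hz]
  · have key : ∀ s : ℝ, 0 < s → s < 1 →
        lam * w j * |βw j| + (2 * A / n) * βw j ≤ s * ((βw j)^2 * (C / n)) := by
      intro s hs hs1
      have hm := master (-(s * βw j))
      have habs : |βw j + -(s * βw j)| = |βw j| - s * |βw j| := by
        rw [show βw j + -(s * βw j) = (1 - s) * βw j by ring, abs_mul,
          abs_of_nonneg (by linarith : (0:ℝ) ≤ 1 - s)]
        ring
      rw [habs] at hm
      have h2 : s * (lam * w j * |βw j| + (2 * A / n) * βw j)
          ≤ s * (s * ((βw j)^2 * (C / n))) := by nlinarith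
      exact le_of_mul_le_mul_left h2 hs
    have h3 : lam * w j * |βw j| + (2 * A / n) * βw j ≤ 0 := aux_nonpos _ _ key
    have h4 : |2 * A / n * βw j| ≤ lam * w j * |βw j| := by
      rw [abs_mul]
      exact mul_le_mul_of_nonneg_right kkt1 (abs_nonneg _)
    have h5 := neg_abs_le (2 * A / n * βw j)
    linarith

lemma swap_mul_sum {n p : ℕ} (c : Fin n → ℝ) (M : Matrix (Fin n) (Fin p) ℝ) (v : Fin p → ℝ) :
    ∑ i, c i * ∑ k, M i k * v k = ∑ k, v k * ∑ i, M i k * c i := by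
  simp_rw [Finset.mul_sum]
  rw [Finset.sum_comm]
  exact Finset.sum_congr rfl fun k _ => Finset.sum_congr rfl fun i _ => by ring

/-- Lemma `irrepresentable`: under the weighted irrepresentable condition, the
(noiseless) weighted Lasso makes no false positive selections. -/
theorem weighted_irrepresentable_no_false_positives
    (n p : ℕ) (hn : 0 < n)
    (X : Matrix (Fin n) (Fin p) ℝ)
    (βtrue : Fin p → ℝ) (f0 : Fin n → ℝ) (hf0 : f0 = X.mulVec βtrue)
    (S : Finset (Fin p)) (hS : ∀ j, j ∈ S ↔ βtrue j ≠ 0)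
    (w : Fin p → ℝ) (hw : ∀ j, 0 < w j)
    (lamInit lamWeight : ℝ) (hlamInit : 0 < lamInit) (hlamWeight : 0 < lamWeight)
    -- `Sig11` is the `S × S` block of the Gram matrix `Σ̂ = XᵀX/n`, assumed invertible
    (Sig11 : Matrix {x // x ∈ S} {x // x ∈ S} ℝ)
    (hSig11 : ∀ a b : {x // x ∈ S}, Sig11 a b = (∑ i, X i a.val * X i b.val) / n)
    (hinv : IsUnit Sig11.det)
    -- the weighted irrepresentable condition for `S`
    (hirr : ∀ τ : {x // x ∈ S} → ℝ, (∀ k, |τ k| ≤ 1) →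
      ∀ j ∉ S,
        |(w j)⁻¹ * ∑ k : {x // x ∈ S},
            ((∑ i, X i j * X i k.val) / n) * (Sig11⁻¹.mulVec (fun a => w a.val * τ a)) k| < 1)
    (βw : Fin p → ℝ)
    (hβw : ∀ β : Fin p → ℝ,
      (∑ i, (X.mulVec βw i - f0 i) ^ 2) / n + lamInit * lamWeight * ∑ j, w j * |βw j|
        ≤ (∑ i, (X.mulVec β i - f0 i) ^ 2) / n + lamInit * lamWeight * ∑ j, w j * |β j|) :
    ∀ j ∉ S, βw j = 0 := by
  have hnR : (0:ℝ) < (n:ℝ) := by exact_mod_cast hn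
  have hnne : (n:ℝ) ≠ 0 := ne_of_gt hnR
  obtain ⟨lam, hlamdef⟩ : ∃ lam : ℝ, lam = lamInit * lamWeight := ⟨_, rfl⟩
  have hlam : 0 < lam := hlamdef ▸ mul_pos hlamInit hlamWeight
  rw [← hlamdef] at hβw
  -- KKT conditions
  obtain ⟨g, hg⟩ : ∃ g : Fin p → ℝ,
      ∀ j, g j = 2 * (∑ i, X i j * (X.mulVec βw i - f0 i)) / n := ⟨_, fun _ => rfl⟩
  have kkt1 : ∀ j, |g j| ≤ lam * w j := fun j =>
    (hg j) ▸ (lasso_kkt n p hn X f0 w hw lam hlam βw hβw j).1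
  have kkt2 : ∀ j, g j * βw j = -(lam * w j * |βw j|) := fun j =>
    (hg j) ▸ (lasso_kkt n p hn X f0 w hw lam hlam βw hβw j).2
  -- auxiliary vectors
  obtain ⟨b, hb⟩ : ∃ b : {x // x ∈ S} → ℝ,
      ∀ a, b a = ∑ j ∈ Sᶜ, ((∑ i, X i a.val * X i j) / n) * βw j := ⟨_, fun _ => rfl⟩
  obtain ⟨y, hy⟩ : ∃ y : {x // x ∈ S} → ℝ,
      y = Sig11⁻¹.mulVec (fun a => g a.val) := ⟨_, rfl⟩
  obtain ⟨v, hvS, hvSc⟩ : ∃ v : Fin p → ℝ,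
      (∀ a : {x // x ∈ S}, v a.val = -(Sig11⁻¹.mulVec b a)) ∧ (∀ j ∉ S, v j = βw j) := by
    refine ⟨fun j => if h : j ∈ S then -(Sig11⁻¹.mulVec b ⟨j, h⟩) else βw j,
      fun a => ?_, fun j hj => dif_neg hj⟩
    simp only [dif_pos a.2]
  obtain ⟨Rv, hRv⟩ : ∃ Rv : Fin n → ℝ, ∀ i, Rv i = ∑ k, X i k * v k := ⟨_, fun _ => rfl⟩
  obtain ⟨q, hq⟩ : ∃ q : Fin p → ℝ,
      ∀ j, q j = ∑ a : {x // x ∈ S}, ((∑ i, X i j * X i a.val) / n) * y a := ⟨_, fun _ => rfl⟩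
  -- symmetry of Sig11⁻¹
  have hSymm : ∀ a c : {x // x ∈ S}, Sig11⁻¹ a c = Sig11⁻¹ c a := by
    have h1 : Sig11.transpose = Sig11 := by
      ext a c
      rw [Matrix.transpose_apply, hSig11, hSig11]
      congr 1
      exact Finset.sum_congr rfl fun i _ => mul_comm _ _
    have h2 : (Sig11⁻¹).transpose = Sig11⁻¹ := by rw [Matrix.transpose_nonsing_inv, h1]
    intro a c
    have h3 := congrFun (congrFun h2 c) a
    rw [← h3]
    rfl
  have hsym : ∀ (x z : {x // x ∈ S} → ℝ),
      ∑ a, x a * Sig11⁻¹.mulVec z a = ∑ a, z a * Sig11⁻¹.mulVec x a := by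
    intro x z
    simp only [Matrix.mulVec, dotProduct, Finset.mul_sum]
    rw [Finset.sum_comm]
    exact Finset.sum_congr rfl fun c _ => Finset.sum_congr rfl fun a _ => by
      rw [hSymm a c]; ring
  have hcomp : ∀ a, Sig11.mulVec (Sig11⁻¹.mulVec b) a = b a := by
    rw [Matrix.mulVec_mulVec, Matrix.mul_nonsing_inv _ hinv, Matrix.one_mulVec]
    intro a; rfl
  -- (K1) : the "gradient" at v vanishes on S
  have hK1 : ∀ a : {x // x ∈ S}, (∑ i, X i a.val * Rv i) = 0 := by
    intro a
    have e1 : ∑ i, X i a.val * Rv i = ∑ k, v k * ∑ i, X i k * X i a.val := by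
      simp only [hRv]
      exact swap_mul_sum (fun i => X i a.val) X v
    rw [e1, ← Finset.sum_add_sum_compl S (fun k => v k * ∑ i, X i k * X i a.val)]
    have eS : ∑ k ∈ S, v k * ∑ i, X i k * X i a.val = -((n:ℝ) * b a) := by
      rw [← Finset.sum_coe_sort S (fun k => v k * ∑ i, X i k * X i a.val)]
      have heach : ∀ k : {x // x ∈ S},
          v k.val * (∑ i, X i k.val * X i a.val)
            = -((n:ℝ) * (Sig11 a k * Sig11⁻¹.mulVec b k)) := by
        intro k
        have hGG : (∑ i, X i a.val * X i k.val) = ∑ i, X i k.val * X i a.val :=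
          Finset.sum_congr rfl fun i _ => mul_comm _ _
        rw [hvS k, hSig11 a k, hGG]
        field_simp
      rw [Finset.sum_congr rfl (fun k _ => heach k)]
      rw [show (∑ k : {x // x ∈ S}, -((n:ℝ) * (Sig11 a k * Sig11⁻¹.mulVec b k)))
          = -((n:ℝ) * ∑ k : {x // x ∈ S}, Sig11 a k * Sig11⁻¹.mulVec b k) by
        rw [Finset.sum_neg_distrib, ← Finset.mul_sum]]
      have : ∑ k : {x // x ∈ S}, Sig11 a k * Sig11⁻¹.mulVec b k
          = Sig11.mulVec (Sig11⁻¹.mulVec b) a := rfl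
      rw [this, hcomp a]
    have eSc : ∑ k ∈ Sᶜ, v k * ∑ i, X i k * X i a.val = (n:ℝ) * b a := by
      rw [hb a, Finset.mul_sum]
      refine Finset.sum_congr rfl fun k hk => ?_
      have hk' : k ∉ S := Finset.mem_compl.mp hk
      have hGG : (∑ i, X i a.val * X i k) = ∑ i, X i k * X i a.val :=
        Finset.sum_congr rfl fun i _ => mul_comm _ _
      rw [hvSc k hk', hGG]
      field_simp
    rw [eS, eSc]
    ring
  -- (K2)
  have hu : ∀ i, X.mulVec βw i - f0 i = ∑ k, X i k * (βw k - βtrue k) := by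
    intro i
    rw [hf0]
    simp only [Matrix.mulVec, dotProduct]
    rw [← Finset.sum_sub_distrib]
    exact Finset.sum_congr rfl fun k _ => by ring
  have hK2 : ∑ i, (X.mulVec βw i - f0 i) * Rv i = ∑ i, Rv i * Rv i := by
    have e0 : ∑ i, (X.mulVec βw i - f0 i) * Rv i
        = ∑ i, Rv i * ∑ k, X i k * (βw k - βtrue k) :=
      Finset.sum_congr rfl fun i _ => by rw [hu i]; ring
    have e1 : ∑ i, (X.mulVec βw i - f0 i) * Rv i
        = ∑ k, (βw k - βtrue k) * ∑ i, X i k * Rv i := by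
      rw [e0]; exact swap_mul_sum Rv X _
    have e2' : ∑ i, Rv i * Rv i = ∑ i, Rv i * ∑ k, X i k * v k :=
      Finset.sum_congr rfl fun i _ => by rw [← hRv i]
    have e2 : ∑ i, Rv i * Rv i = ∑ k, v k * ∑ i, X i k * Rv i := by
      rw [e2']; exact swap_mul_sum Rv X v
    rw [e1, e2]
    refine Finset.sum_congr rfl fun k _ => ?_
    by_cases hk : k ∈ S
    · rw [hK1 ⟨k, hk⟩]; ring
    · have h0 : βtrue k = 0 := by
        by_contra hne; exact hk ((hS k).mpr hne)
      rw [h0, hvSc k hk]; ring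
  -- (K3)
  have hK3 : ∑ j, g j * v j = 2 * (∑ i, Rv i * Rv i) / n := by
    have e0 : ∑ j, g j * v j
        = ∑ j, 2 * (v j * ∑ i, X i j * (X.mulVec βw i - f0 i)) / n :=
      Finset.sum_congr rfl fun j _ => by rw [hg j]; ring
    rw [e0, ← Finset.sum_div, ← Finset.mul_sum]
    have e1 : ∑ j, v j * ∑ i, X i j * (X.mulVec βw i - f0 i)
        = ∑ i, (X.mulVec βw i - f0 i) * Rv i := by
      rw [← swap_mul_sum (fun i => X.mulVec βw i - f0 i) X v]
      exact Finset.sum_congr rfl fun i _ => by rw [hRv i]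
    rw [e1, hK2]
  have hnonneg : 0 ≤ ∑ j, g j * v j := by
    rw [hK3]
    apply div_nonneg _ hnR.le
    exact mul_nonneg (by norm_num) (Finset.sum_nonneg fun i _ => mul_self_nonneg _)
  -- (K4)
  have hK4 : ∑ j ∈ S, g j * v j = -(∑ j ∈ Sᶜ, βw j * q j) := by
    rw [← Finset.sum_coe_sort S (fun j => g j * v j)]
    have e1 : ∑ a : {x // x ∈ S}, g a.val * v a.val
        = -(∑ a : {x // x ∈ S}, g a.val * Sig11⁻¹.mulVec b a) := by
      rw [← Finset.sum_neg_distrib]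
      exact Finset.sum_congr rfl fun a _ => by rw [hvS a]; ring
    rw [e1, hsym (fun a => g a.val) b]
    congr 1
    have e2 : ∀ a : {x // x ∈ S}, b a * Sig11⁻¹.mulVec (fun a => g a.val) a
        = ∑ j ∈ Sᶜ, ((∑ i, X i a.val * X i j) / n) * βw j * y a := by
      intro a
      rw [hb a, hy, Finset.sum_mul]
    rw [Finset.sum_congr rfl fun a _ => e2 a, Finset.sum_comm]
    refine Finset.sum_congr rfl fun j hj => ?_
    rw [hq j, Finset.mul_sum]
    refine Finset.sum_congr rfl fun a _ => ?_
    have hGG : (∑ i, X i a.val * X i j) = ∑ i, X i j * X i a.val :=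
      Finset.sum_congr rfl fun i _ => mul_comm _ _
    rw [hGG]
    ring
  -- bound |q j| via the irrepresentable condition
  have hqbound : ∀ j ∉ S, |q j| < lam * w j := by
    intro j hj
    have hbound : ∀ k : {x // x ∈ S}, |(-(g k.val)) / (lam * w k.val)| ≤ 1 := by
      intro k
      rw [abs_div, abs_neg, abs_of_pos (mul_pos hlam (hw k.val))]
      exact (div_le_one (mul_pos hlam (hw k.val))).mpr (kkt1 k.val)
    have hirr' := hirr (fun k => (-(g k.val)) / (lam * w k.val)) hbound j hj
    have hfun : (fun a : {x // x ∈ S} => w a.val * ((-(g a.val)) / (lam * w a.val)))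
        = (-(lam⁻¹)) • (fun a : {x // x ∈ S} => g a.val) := by
      funext a
      have hwa : w a.val ≠ 0 := (hw a.val).ne'
      simp only [Pi.smul_apply, smul_eq_mul]
      field_simp
    rw [hfun, Matrix.mulVec_smul] at hirr'
    have hsum : ∑ k : {x // x ∈ S},
        ((∑ i, X i j * X i k.val) / n) * ((-(lam⁻¹)) • Sig11⁻¹.mulVec (fun a => g a.val)) k
        = -(lam⁻¹) * q j := by
      rw [hq j, Finset.mul_sum]
      refine Finset.sum_congr rfl fun k _ => ?_
      simp only [Pi.smul_apply, smul_eq_mul, hy]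
      ring
    rw [hsum] at hirr'
    have heq : (w j)⁻¹ * (-(lam⁻¹) * q j) = -(q j / (lam * w j)) := by
      field_simp
    rw [heq, abs_neg, abs_div, abs_of_pos (mul_pos hlam (hw j))] at hirr'
    exact (div_lt_one (mul_pos hlam (hw j))).mp hirr'
  -- conclusion
  intro j0 hj0
  by_contra hne
  have hj0c : j0 ∈ Sᶜ := Finset.mem_compl.mpr hj0
  have hSc : ∑ j ∈ Sᶜ, g j * v j = ∑ j ∈ Sᶜ, -(lam * w j * |βw j|) := by
    refine Finset.sum_congr rfl fun j hj => ?_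
    have hj' : j ∉ S := Finset.mem_compl.mp hj
    rw [hvSc j hj', kkt2 j]
  have htotal : ∑ j, g j * v j
      = -(∑ j ∈ Sᶜ, βw j * q j) + ∑ j ∈ Sᶜ, -(lam * w j * |βw j|) := by
    rw [← Finset.sum_add_sum_compl S (fun j => g j * v j), hK4, hSc]
  have hsum_le : ∑ j ∈ Sᶜ, (βw j * q j + lam * w j * |βw j|) ≤ 0 := by
    rw [Finset.sum_add_distrib]
    have : 0 ≤ -(∑ j ∈ Sᶜ, βw j * q j) + ∑ j ∈ Sᶜ, -(lam * w j * |βw j|) := by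
      rw [← htotal]; exact hnonneg
    rw [Finset.sum_neg_distrib] at this
    linarith
  have hterm0 : ∀ j ∈ Sᶜ, 0 ≤ βw j * q j + lam * w j * |βw j| := by
    intro j hj
    have hj' : j ∉ S := Finset.mem_compl.mp hj
    have h1 : |βw j * q j| ≤ |βw j| * (lam * w j) := by
      rw [abs_mul]
      exact mul_le_mul_of_nonneg_left (hqbound j hj').le (abs_nonneg _)
    have h2 := neg_abs_le (βw j * q j)
    nlinarith [abs_nonneg (βw j)]
  have hstrict : 0 < βw j0 * q j0 + lam * w j0 * |βw j0| := by
    have hpos : 0 < |βw j0| := abs_pos.mpr hne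
    have h1 : |βw j0 * q j0| < |βw j0| * (lam * w j0) := by
      rw [abs_mul]
      exact (mul_lt_mul_iff_right₀ hpos).mpr (hqbound j0 hj0)
    have h2 := neg_abs_le (βw j0 * q j0)
    nlinarith
  have hfinal : 0 < ∑ j ∈ Sᶜ, (βw j * q j + lam * w j * |βw j|) := by
    rw [← Finset.add_sum_erase _ _ hj0c]
    have : 0 ≤ ∑ j ∈ (Sᶜ).erase j0, (βw j * q j + lam * w j * |βw j|) :=
      Finset.sum_nonneg fun j hj => hterm0 j (Finset.mem_of_mem_erase hj)
    linarith
  linarith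
end

section
/- Let Σ be a symmetric positive semidefinite p×p real matrix with Σ_{jj} = 1 for all j, and let S ⊆ {1,…,p} be nonempty. Let Λ_min > 0 satisfy β_SᵀΣβ_S ≥ Λ_min²·‖β_S‖_2² for every β (so the S×S block Σ₁₁(S) is invertible). Let w_j ≥ 0 for j ∈ S and w_j > 0 for j ∉ S, with diagonal weight matrices W_S and W_{S^c}. If ‖w_S‖_2 < Λ_min · min_{j∉S} w_j, then the weighted irrepresentable condition holds for S: for every τ ∈ ℝ^S with ‖τ‖_∞ ≤ 1, ‖W_{S^c}^{−1}·Σ₂₁(S)·Σ₁₁(S)^{−1}·W_S·τ‖_∞ < 1. -/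
/-!
Put `v := Σ₁₁⁻¹ W_S τ`, so that `Σ₁₁ v = W_S τ` and the quantity to bound is `(Σ v)_j`
for `j ∉ S`. The eigenvalue bound and Cauchy–Schwarz give
`Λ² ‖v‖² ≤ vᵀ Σ₁₁ v = vᵀ W_S τ ≤ ‖v‖ ‖w_S‖`, hence `Λ² · vᵀ Σ₁₁ v ≤ ‖w_S‖²`.
Cauchy–Schwarz for the semidefinite form `Σ`, applied to `e_j` and `v` extended by zero, gives
`(Σ v)_j² ≤ Σ_jj · vᵀ Σ₁₁ v = vᵀ Σ₁₁ v`, so `|(Σ v)_j| ≤ ‖w_S‖ / Λ < min_{k∉S} w_k ≤ w_j`.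
-/

open Matrix

namespace Matrix

variable {m n : Type*}

theorem PosSemidef.dotProduct_mulVec_sq_le [Fintype n] {A : Matrix n n ℝ} (hA : A.PosSemidef)
    (x y : n → ℝ) :
    (x ⬝ᵥ A *ᵥ y) ^ 2 ≤ (x ⬝ᵥ A *ᵥ x) * (y ⬝ᵥ A *ᵥ y) := by
  classical
  have hsymm : y ⬝ᵥ A *ᵥ x = x ⬝ᵥ A *ᵥ y := by
    rw [dotProduct_mulVec, ← mulVec_transpose, ← conjTranspose_eq_transpose_of_trivial,
      hA.isHermitian.eq, dotProduct_comm]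
  have := (toBilin' A).apply_mul_apply_le_of_forall_zero_le
    (fun z => by simpa [toBilin'_apply'] using hA.dotProduct_mulVec_nonneg z) x y
  rwa [toBilin'_apply', toBilin'_apply', toBilin'_apply', toBilin'_apply', hsymm, ← sq] at this

theorem PosSemidef.sq_sum_mul_le_diag_mul [Fintype m] {A : Matrix n n ℝ} (hA : A.PosSemidef)
    (e : m → n) (i : n) (v : m → ℝ) :
    (∑ k, A i (e k) * v k) ^ 2 ≤ A i i * (v ⬝ᵥ A.submatrix e e *ᵥ v) := by
  classical
  -- Cauchy–Schwarz on the index set `Option m`, with `none` standing for the row `i`.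
  have := (hA.submatrix fun o : Option m => o.elim i e).dotProduct_mulVec_sq_le
    (Pi.single none 1) (fun o => o.elim 0 v)
  simpa [dotProduct, mulVec, Fintype.sum_option, Finset.mul_sum] using this

theorem restrict_dotProduct_submatrix_mulVec_restrict {R : Type*} [CommSemiring R]
    [Fintype n] [DecidableEq n] (A : Matrix n n R) (S : Finset n) (u v : n → R) :
    S.restrict u ⬝ᵥ A.submatrix (↑) (↑) *ᵥ S.restrict v
      = (fun i => if i ∈ S then u i else 0) ⬝ᵥ A *ᵥ (fun i => if i ∈ S then v i else 0) := by
  simp only [dotProduct, mulVec, Finset.restrict, submatrix_apply, Finset.univ_eq_attach,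
    ite_mul, mul_ite, zero_mul, mul_zero, Finset.sum_ite_mem, Finset.univ_inter,
    ← Finset.sum_attach S]

theorem coercive_submatrix_of_forall_ite [Fintype n] [DecidableEq n] {A : Matrix n n ℝ}
    {S : Finset n} {c : ℝ}
    (h : ∀ β : n → ℝ, c * ∑ j ∈ S, β j ^ 2 ≤
      (fun j => if j ∈ S then β j else 0) ⬝ᵥ A *ᵥ (fun j => if j ∈ S then β j else 0))
    (x : S → ℝ) :
    c * ∑ k, x k ^ 2 ≤ x ⬝ᵥ A.submatrix (↑) (↑) *ᵥ x := by
  obtain ⟨β, rfl⟩ : ∃ β : n → ℝ, S.restrict β = x :=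
    ⟨fun i => if hi : i ∈ S then x ⟨i, hi⟩ else 0, funext fun k => by simp [k.2]⟩
  rw [restrict_dotProduct_submatrix_mulVec_restrict]
  convert h β using 2
  exact Finset.sum_attach S (fun j => β j ^ 2)

section Coercive

variable [Fintype m] {A : Matrix m m ℝ} {c : ℝ}

theorem isUnit_of_coercive [DecidableEq m] (hc : 0 < c)
    (hA : ∀ x, c * ∑ i, x i ^ 2 ≤ x ⬝ᵥ A *ᵥ x) : IsUnit A := by
  refine mulVec_injective_iff_isUnit.mp <| (injective_iff_map_eq_zero A.mulVecLin).mpr ?_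
  intro x hx
  have h := hA x
  rw [mulVecLin_apply] at hx
  rw [hx, dotProduct_zero] at h
  have hsum : ∑ i, x i ^ 2 = 0 := le_antisymm (nonpos_of_mul_nonpos_right h hc) (by positivity)
  funext i
  simpa using (Finset.sum_eq_zero_iff_of_nonneg (fun i _ => sq_nonneg (x i))).mp hsum i

theorem mul_dotProduct_mulVec_le_of_coercive (hc : 0 < c)
    (hA : ∀ x, c * ∑ i, x i ^ 2 ≤ x ⬝ᵥ A *ᵥ x) {v b : m → ℝ} (hv : A *ᵥ v = b) :
    c * (v ⬝ᵥ A *ᵥ v) ≤ ∑ i, b i ^ 2 := by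
  have hcs : (v ⬝ᵥ b) ^ 2 ≤ (∑ i, v i ^ 2) * ∑ i, b i ^ 2 :=
    Finset.sum_mul_sq_le_sq_mul_sq _ _ _
  have hlow := hA v
  rw [hv] at hlow ⊢
  have hb : 0 ≤ ∑ i, b i ^ 2 := by positivity
  -- with `Q := v ⬝ᵥ b`: `c Q² ≤ c ‖v‖² ‖b‖² ≤ Q ‖b‖²`
  rcases le_or_gt (v ⬝ᵥ b) 0 with hneg | hpos
  · nlinarith
  · nlinarith

end Coercive

end Matrix

theorem sufficient_for_weighted_irrepresentable_general
    (p : ℕ)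
    (Gram : Matrix (Fin p) (Fin p) ℝ)
    (hpsd : Gram.PosSemidef)
    (hdiag : ∀ j, Gram j j = 1)
    (S : Finset (Fin p))
    (Λmin : ℝ) (hΛmin : 0 < Λmin)
    (hEig : ∀ β : Fin p → ℝ,
      Λmin ^ 2 * (∑ j ∈ S, (β j) ^ 2)
        ≤ (fun j => if j ∈ S then β j else 0) ⬝ᵥ
            Gram.mulVec (fun j => if j ∈ S then β j else 0))
    (w : Fin p → ℝ) (hwSc : ∀ j ∉ S, 0 < w j)
    (wmin : ℝ) (hwmin : ∀ j ∉ S, wmin ≤ w j)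
    (hcond : Real.sqrt (∑ j ∈ S, (w j) ^ 2) < Λmin * wmin)
    -- `Sig11` is the `S × S` block of `Gram`
    (Sig11 : Matrix {x // x ∈ S} {x // x ∈ S} ℝ)
    (hSig11 : ∀ a b : {x // x ∈ S}, Sig11 a b = Gram a.val b.val) :
    ∀ τ : {x // x ∈ S} → ℝ, (∀ k, |τ k| ≤ 1) →
      ∀ j ∉ S,
        |(w j)⁻¹ * ∑ k : {x // x ∈ S},
            Gram j k.val * (Sig11⁻¹.mulVec (fun a => w a.val * τ a)) k| < 1 := by
  intro τ hτ j hj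
  have hSig : Sig11 = Gram.submatrix Subtype.val Subtype.val := Matrix.ext hSig11
  have hc : 0 < Λmin ^ 2 := by positivity
  have hcoer : ∀ x, Λmin ^ 2 * ∑ k, x k ^ 2 ≤ x ⬝ᵥ Sig11 *ᵥ x :=
    hSig ▸ coercive_submatrix_of_forall_ite hEig
  set b : S → ℝ := fun a => w a * τ a
  set v := Sig11⁻¹ *ᵥ b
  have hv : Sig11 *ᵥ v = b := by
    rw [mulVec_mulVec, mul_nonsing_inv _ ((isUnit_iff_isUnit_det _).mp
      (isUnit_of_coercive hc hcoer)), one_mulVec]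
  have hb : ∑ a, b a ^ 2 ≤ ∑ k ∈ S, w k ^ 2 := by
    rw [← Finset.sum_attach S]
    refine Finset.sum_le_sum fun a _ => ?_
    rw [mul_pow, ← sq_abs (τ a)]
    exact mul_le_of_le_one_right (sq_nonneg _) (pow_le_one₀ (abs_nonneg _) (hτ a))
  have hrow : Λmin ^ 2 * (∑ k : S, Gram j k * v k) ^ 2 ≤ ∑ k ∈ S, w k ^ 2 := by
    have := hpsd.sq_sum_mul_le_diag_mul Subtype.val j v
    rw [hdiag, one_mul, ← hSig] at this
    exact ((mul_le_mul_of_nonneg_left this hc.le).trans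
      (mul_dotProduct_mulVec_le_of_coercive hc hcoer hv)).trans hb
  have hT : Λmin * |∑ k : S, Gram j k * v k| ≤ Real.sqrt (∑ k ∈ S, w k ^ 2) :=
    Real.le_sqrt_of_sq_le (by rwa [mul_pow, sq_abs])
  rw [abs_mul, abs_inv, abs_of_pos (hwSc j hj), inv_mul_lt_one₀ (hwSc j hj)]
  exact lt_of_mul_lt_mul_left (hT.trans_lt (hcond.trans_le
    (mul_le_mul_of_nonneg_left (hwmin j hj) hΛmin.le))) hΛmin.le

/-- Lemma `boundirr`: if `‖w_S‖₂ < Λ_min · min_{j∉S} w_j` then the weighted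
irrepresentable condition holds for `S`. -/
theorem sufficient_for_weighted_irrepresentable
    (p : ℕ)
    (Gram : Matrix (Fin p) (Fin p) ℝ)
    (hsym : Gram.IsSymm) (hpsd : Gram.PosSemidef)
    (hdiag : ∀ j, Gram j j = 1)
    (S : Finset (Fin p)) (hS : S.Nonempty)
    (Λmin : ℝ) (hΛmin : 0 < Λmin)
    (hEig : ∀ β : Fin p → ℝ,
      Λmin ^ 2 * (∑ j ∈ S, (β j) ^ 2)
        ≤ (fun j => if j ∈ S then β j else 0) ⬝ᵥ
            Gram.mulVec (fun j => if j ∈ S then β j else 0))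
    (w : Fin p → ℝ) (hwS : ∀ j ∈ S, 0 ≤ w j) (hwSc : ∀ j ∉ S, 0 < w j)
    (wmin : ℝ) (hwmin : ∀ j ∉ S, wmin ≤ w j)
    (hcond : Real.sqrt (∑ j ∈ S, (w j) ^ 2) < Λmin * wmin)
    -- `Sig11` is the `S × S` block of `Gram`
    (Sig11 : Matrix {x // x ∈ S} {x // x ∈ S} ℝ)
    (hSig11 : ∀ a b : {x // x ∈ S}, Sig11 a b = Gram a.val b.val) :
    ∀ τ : {x // x ∈ S} → ℝ, (∀ k, |τ k| ≤ 1) →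
      ∀ j ∉ S,
        |(w j)⁻¹ * ∑ k : {x // x ∈ S},
            Gram j k.val * (Sig11⁻¹.mulVec (fun a => w a.val * τ a)) k| < 1 :=
  sufficient_for_weighted_irrepresentable_general p Gram hpsd hdiag S Λmin hΛmin hEig w hwSc wmin
    hwmin hcond Sig11 hSig11
end

section
/- Let Σ be a symmetric positive semidefinite p×p real matrix, let S ⊆ {1,…,p} be nonempty with s := |S| and Σ₁₁(S) invertible, and let w_j ≥ 0 for j ∈ S and w_j > 0 for j ∉ S, with diagonal weight matrices W_S and W_{S^c}. Let ϑ ≥ 0 be any constant such that |β_{S^c}ᵀΣβ_S| ≤ ϑ·(β_SᵀΣβ_S) for every β ∈ ℝ^p with ‖β_{S^c}‖_1 ≤ √s·‖β_S‖_2 (i.e., ϑ is an upper bound for the adaptive restricted regression ϑ_adaptive(S)). Then for every τ ∈ ℝ^S with ‖τ‖_∞ ≤ 1: ‖W_{S^c}^{−1}·Σ₂₁(S)·Σ₁₁(S)^{−1}·W_S·τ‖_∞ ≤ (‖w_S‖_2/(√s · min_{j∉S} w_j)) · ϑ. -/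
open Finset Matrix

/-- The key inequality (`weshow`) in the proof of Lemma `boundirr`: the weighted
irrepresentable quantity is bounded by the adaptive restricted regression. -/
theorem irrepresentable_bounded_by_adaptive_restricted_regression
    (p : ℕ)
    (Gram : Matrix (Fin p) (Fin p) ℝ)
    (hsym : Gram.IsSymm) (hpsd : Gram.PosSemidef)
    (S : Finset (Fin p)) (hS : S.Nonempty)
    (w : Fin p → ℝ) (hwS : ∀ j ∈ S, 0 ≤ w j) (hwSc : ∀ j ∉ S, 0 < w j)
    (hSc : (Sᶜ : Finset (Fin p)).Nonempty)
    -- `Sig11` is the `S × S` block of `Gram`, assumed invertible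
    (Sig11 : Matrix {x // x ∈ S} {x // x ∈ S} ℝ)
    (hSig11 : ∀ a b : {x // x ∈ S}, Sig11 a b = Gram a.val b.val)
    (hinv : IsUnit Sig11.det)
    -- `ϑ` is an upper bound for the adaptive restricted regression `ϑ_adaptive(S)`
    (ϑ : ℝ) (hϑ0 : 0 ≤ ϑ)
    (hϑ : ∀ β : Fin p → ℝ,
      (∑ j ∈ Sᶜ, |β j|) ≤ Real.sqrt (S.card) * Real.sqrt (∑ j ∈ S, (β j) ^ 2) →
      |(fun j => if j ∈ S then 0 else β j) ⬝ᵥ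
          Gram.mulVec (fun j => if j ∈ S then β j else 0)|
        ≤ ϑ * ((fun j => if j ∈ S then β j else 0) ⬝ᵥ
            Gram.mulVec (fun j => if j ∈ S then β j else 0))) :
    ∀ τ : {x // x ∈ S} → ℝ, (∀ k, |τ k| ≤ 1) →
      ∀ j ∉ S,
        |(w j)⁻¹ * ∑ k : {x // x ∈ S},
            Gram j k.val * (Sig11⁻¹.mulVec (fun a => w a.val * τ a)) k|
          ≤ (Real.sqrt (∑ j ∈ S, (w j) ^ 2)
              / (Real.sqrt (S.card) * Sᶜ.inf' hSc w)) * ϑ := by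
  intro τ hτ j hj
  classical
  have hs0 : 0 < (S.card : ℝ) := by exact_mod_cast Finset.card_pos.mpr hS
  have hsq : 0 < Real.sqrt (S.card) := Real.sqrt_pos.mpr hs0
  set m := Sᶜ.inf' hSc w with hm
  have hjc : j ∈ Sᶜ := Finset.mem_compl.mpr hj
  have hm_le : m ≤ w j := Finset.inf'_le _ hjc
  have hm0 : 0 < m := by
    obtain ⟨i, hi, hie⟩ := Finset.exists_mem_eq_inf' hSc w
    rw [hm, hie]; exact hwSc i (Finset.mem_compl.mp hi)
  have hwj : 0 < w j := hwSc j hj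
  set v : {x // x ∈ S} → ℝ := fun a => w a.val * τ a with hv
  set γ : {x // x ∈ S} → ℝ := Sig11⁻¹.mulVec v with hγ
  have hSg : Sig11.mulVec γ = v := by
    rw [hγ, Matrix.mulVec_mulVec, Matrix.mul_nonsing_inv _ hinv, Matrix.one_mulVec]
  set N := Real.sqrt (∑ k ∈ S.attach, γ k ^ 2) with hN
  have hN0 : 0 ≤ N := Real.sqrt_nonneg _
  set W := Real.sqrt (∑ j ∈ S, (w j) ^ 2) with hW
  have hW0 : 0 ≤ W := Real.sqrt_nonneg _
  set T := ∑ k ∈ S.attach, Gram j k.val * γ k with hT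
  have goal_eq : (∑ k : {x // x ∈ S},
      Gram j k.val * (Sig11⁻¹.mulVec (fun a => w a.val * τ a)) k) = T := rfl
  rw [goal_eq]
  -- key inequality
  have key : Real.sqrt S.card * |T| ≤ ϑ * W := by
    rcases eq_or_lt_of_le hN0 with hNz | hNpos
    · -- N = 0 forces γ = 0 hence T = 0
      have hsum : ∑ k ∈ S.attach, γ k ^ 2 = 0 := by
        have hle : (∑ k ∈ S.attach, γ k ^ 2) ≤ 0 := Real.sqrt_eq_zero'.mp hNz.symm
        have hnn : 0 ≤ ∑ k ∈ S.attach, γ k ^ 2 :=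
          Finset.sum_nonneg fun k _ => sq_nonneg _
        linarith
      have hγ0 : ∀ k ∈ S.attach, γ k = 0 := by
        intro k hk
        have := (Finset.sum_eq_zero_iff_of_nonneg (fun k _ => sq_nonneg (γ k))).mp hsum k hk
        exact pow_eq_zero_iff (n := 2) (by norm_num) |>.mp this
      have hT0 : T = 0 := Finset.sum_eq_zero fun k hk => by rw [hγ0 k hk, mul_zero]
      rw [hT0, abs_zero, mul_zero]
      exact mul_nonneg hϑ0 hW0
    · -- main case: apply hϑ
      set c := Real.sqrt S.card * N with hc
      have hc0 : 0 < c := mul_pos hsq hNpos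
      set β : Fin p → ℝ := fun i => if h : i ∈ S then γ ⟨i, h⟩ else if i = j then c else 0
        with hβ
      have hβS : (fun i => if i ∈ S then β i else 0)
          = fun i => if h : i ∈ S then γ ⟨i, h⟩ else 0 := by
        funext i
        by_cases h : i ∈ S <;> simp [hβ, h]
      have hβSc : (fun i => if i ∈ S then 0 else β i)
          = fun i => if i = j then c else 0 := by
        funext i
        by_cases h : i ∈ S
        · have : i ≠ j := fun e => hj (e ▸ h)
          simp [h, this]
        · simp [hβ, h]
      -- the constraint
      have hcon : (∑ i ∈ Sᶜ, |β i|) ≤ Real.sqrt S.card * Real.sqrt (∑ i ∈ S, (β i) ^ 2) := by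
        have h1 : ∑ i ∈ Sᶜ, |β i| = c := by
          rw [Finset.sum_eq_single_of_mem j hjc]
          · simp [hβ, hj, abs_of_pos hc0]
          · intro i hi hij
            have hiS : i ∉ S := Finset.mem_compl.mp hi
            simp [hβ, hiS, hij]
        have h2 : ∑ i ∈ S, (β i) ^ 2 = ∑ k ∈ S.attach, γ k ^ 2 := by
          rw [← Finset.sum_attach S (fun i => (β i) ^ 2)]
          refine Finset.sum_congr rfl fun k _ => ?_
          simp [hβ, k.property]
        rw [h1, h2, ← hN, ← hc]
      have hineq := hϑ β hcon
      rw [hβS, hβSc] at hineq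
      -- compute the left side
      have hmv : ∀ i : Fin p,
          Gram.mulVec (fun i => if h : i ∈ S then γ ⟨i, h⟩ else 0) i
            = ∑ k ∈ S.attach, Gram i k.val * γ k := by
        intro i
        rw [Matrix.mulVec, dotProduct,
          ← Finset.sum_subset (Finset.subset_univ S) (fun x _ hx => by simp [hx]),
          ← Finset.sum_attach S (fun k => Gram i k * (if h : k ∈ S then γ ⟨k, h⟩ else 0))]
        refine Finset.sum_congr rfl fun k _ => ?_
        simp [k.property]
      have hlhs : (fun i => if i = j then c else 0) ⬝ᵥ
          Gram.mulVec (fun i => if h : i ∈ S then γ ⟨i, h⟩ else 0) = c * T := by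
        rw [dotProduct, Finset.sum_eq_single_of_mem j (Finset.mem_univ j)]
        · rw [if_pos rfl, hmv j, hT]
        · intro i _ hij
          rw [if_neg hij, zero_mul]
      -- compute the right side
      have hQ : (fun i => if h : i ∈ S then γ ⟨i, h⟩ else 0) ⬝ᵥ
          Gram.mulVec (fun i => if h : i ∈ S then γ ⟨i, h⟩ else 0)
          = ∑ k ∈ S.attach, γ k * v k := by
        rw [dotProduct]
        rw [← Finset.sum_subset (Finset.subset_univ S)]
        · rw [← Finset.sum_attach S
            (fun i => (if h : i ∈ S then γ ⟨i, h⟩ else 0) * Gram.mulVec _ i)]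
          have : ∀ k : {x // x ∈ S},
              (if h : k.val ∈ S then γ ⟨k.val, h⟩ else 0) *
                Gram.mulVec (fun i => if h : i ∈ S then γ ⟨i, h⟩ else 0) k.val
              = γ k * Sig11.mulVec γ k := by
            intro k
            rw [dif_pos k.property, hmv k.val, Matrix.mulVec, dotProduct]
            congr 1
            refine Finset.sum_congr rfl fun b _ => ?_
            rw [hSig11]
          rw [Finset.sum_congr rfl fun k _ => this k, hSg]
        · intro x _ hx
          simp [hx]
      rw [hlhs, hQ] at hineq
      -- bound Q by N * W
      have hQle : ∑ k ∈ S.attach, γ k * v k ≤ N * W := by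
        have step1 : ∑ k ∈ S.attach, γ k * v k ≤ ∑ k ∈ S.attach, |γ k| * w k.val := by
          refine Finset.sum_le_sum fun k _ => ?_
          have h1 : γ k * v k ≤ |γ k * v k| := le_abs_self _
          have h2 : |γ k * v k| = |γ k| * (w k.val * |τ k|) := by
            rw [hv, abs_mul, abs_mul, abs_of_nonneg (hwS k.val k.property)]
          have h3 : w k.val * |τ k| ≤ w k.val * 1 :=
            mul_le_mul_of_nonneg_left (hτ k) (hwS k.val k.property)
          calc γ k * v k ≤ |γ k| * (w k.val * |τ k|) := h2 ▸ h1
            _ ≤ |γ k| * (w k.val * 1) :=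
                mul_le_mul_of_nonneg_left h3 (abs_nonneg _)
            _ = |γ k| * w k.val := by ring
        have step2 : ∑ k ∈ S.attach, |γ k| * w k.val ≤ N * W := by
          have cs := Real.sum_mul_le_sqrt_mul_sqrt S.attach (fun k => |γ k|)
            (fun k => w k.val)
          have e1 : ∑ k ∈ S.attach, |γ k| ^ 2 = ∑ k ∈ S.attach, γ k ^ 2 := by
            refine Finset.sum_congr rfl fun k _ => sq_abs _
          have e2 : ∑ k ∈ S.attach, (w k.val) ^ 2 = ∑ i ∈ S, (w i) ^ 2 :=
            Finset.sum_attach S (fun i => (w i) ^ 2)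
          rw [e1, e2] at cs
          exact cs
        linarith
      -- conclude
      have h1 : |c * T| = c * |T| := by rw [abs_mul, abs_of_pos hc0]
      rw [h1, hc] at hineq
      have h2 : Real.sqrt S.card * N * |T| ≤ ϑ * (N * W) := by
        calc Real.sqrt S.card * N * |T| ≤ ϑ * (∑ k ∈ S.attach, γ k * v k) := hineq
          _ ≤ ϑ * (N * W) := mul_le_mul_of_nonneg_left hQle hϑ0
      have := mul_le_mul_of_nonneg_right h2 (le_of_lt (inv_pos.mpr hNpos))
      calc Real.sqrt S.card * |T|
          = Real.sqrt S.card * N * |T| * N⁻¹ := by field_simp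
        _ ≤ ϑ * (N * W) * N⁻¹ := this
        _ = ϑ * W := by field_simp
  -- from key to the goal
  have hTb : |T| ≤ ϑ * W / Real.sqrt S.card := by
    rw [le_div_iff₀ hsq]
    linarith [key]
  rw [abs_mul, abs_inv, abs_of_pos hwj]
  have h3 : (w j)⁻¹ * |T| ≤ m⁻¹ * (ϑ * W / Real.sqrt S.card) := by
    have := mul_le_mul (inv_anti₀ hm0 hm_le) hTb (abs_nonneg _)
      (le_of_lt (inv_pos.mpr hm0))
    exact this
  calc (w j)⁻¹ * |T| ≤ m⁻¹ * (ϑ * W / Real.sqrt S.card) := h3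
    _ = W / (Real.sqrt S.card * m) * ϑ := by
        field_simp
end
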